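/- arXiv:math/0404019 — 5 statements merged into one kernel-verified Lean document; each statement's English description precedes it below -/
import Mathlib

section
/- Let Ω be an n-dimensional vector space over F_q, let 0 ≤ r₁, r₂ ≤ n, and let t with max(0, r₂ - r₁) ≤ t ≤ min(r₂, n - r₁). The number of pairs (x₁, x₂) of subspaces with dim x₁ = r₁, dim x₂ = r₂ and dim(x₂/(x₂ ∩ x₁)) = t equals q^{t(r₁ - r₂ + t)} · [n choose t, r₂ - t, r₁ - r₂ + t, n - r₁ - t]_q. -/
noncomputable def qPoch (q : ℚ) (k : ℕ) : ℚ := ∏ j ∈ Finset.range k, (1 - q ^ (j + 1))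

/-- The q-multinomial coefficient `[n choose a,b,c,d]_q` (for `a+b+c+d = n`). -/
noncomputable def qMultinom4 (q : ℚ) (n a b c d : ℕ) : ℚ :=
  qPoch q n / (qPoch q a * qPoch q b * qPoch q c * qPoch q d)

/-!
Fiber the pairs `(x₁, x₂)` first over `x₂`, which ranges over the `r₂`-dimensional subspaces,
and then over `s = x₂ ⊓ x₁`, which ranges over the `(r₂ - t)`-dimensional subspaces of `x₂`.
Passing to `V ⧸ s`, the `x₁` with `x₂ ⊓ x₁ = s` correspond to the `(r₁ + t - r₂)`-dimensional
subspaces meeting the `t`-dimensional subspace `x₂ / s` trivially. Subspaces of dimension `d`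
meeting a `u`-dimensional `U` trivially are counted through their bases: these are exactly the
`d`-tuples independent modulo `U`, of which there are `q ^ (u * d)` for each independent `d`-tuple
of `V ⧸ U`, giving `q ^ (u * d) [dim V - u choose d]_q`. The product of the three Gaussian
binomials so obtained is the `q`-multinomial coefficient.
-/

open Finset Module Submodule

noncomputable def qBinomial (q : ℚ) (m k : ℕ) : ℚ := qPoch q m / (qPoch q k * qPoch q (m - k))

lemma qPoch_ne_zero {q : ℚ} (hq : 1 < q) (k : ℕ) : qPoch q k ≠ 0 :=
  prod_ne_zero_iff.mpr fun j _ => sub_ne_zero.mpr (one_lt_pow₀ hq j.succ_ne_zero).ne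

lemma prod_pow_self_sub_pow_ne_zero {q : ℚ} (hq : 1 < q) (k : ℕ) :
    ∏ i ∈ range k, (q ^ k - q ^ i) ≠ 0 :=
  prod_ne_zero_iff.mpr fun _ hi => sub_ne_zero.mpr (pow_lt_pow_right₀ hq (mem_range.mp hi)).ne'

lemma prod_pow_sub_pow_mul_qPoch (q : ℚ) (a k : ℕ) :
    (∏ i ∈ range k, (q ^ (a + k) - q ^ i)) * qPoch q a =
      (-1) ^ k * q ^ (∑ i ∈ range k, i) * qPoch q (a + k) := by
  induction k with
  | zero => simp
  | succ k ih =>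
    have hpoch : qPoch q (a + (k + 1)) = qPoch q (a + k) * (1 - q ^ (a + k + 1)) :=
      prod_range_succ _ _
    have hfactor : ∏ i ∈ range k, (q ^ (a + (k + 1)) - q ^ (i + 1)) =
        q ^ k * ∏ i ∈ range k, (q ^ (a + k) - q ^ i) := by
      rw [show q ^ k = ∏ _i ∈ range k, q by simp, ← prod_mul_distrib]
      exact prod_congr rfl fun i _ => by ring
    rw [prod_range_succ', hfactor, sum_range_succ, hpoch]
    linear_combination (q ^ (a + k + 1) - 1) * q ^ k * ih

lemma prod_pow_sub_pow_div {q : ℚ} (hq : 1 < q) {m k : ℕ} (hk : k ≤ m) :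
    (∏ i ∈ range k, (q ^ m - q ^ i)) / ∏ i ∈ range k, (q ^ k - q ^ i) = qBinomial q m k := by
  obtain ⟨a, rfl⟩ := Nat.exists_eq_add_of_le' hk
  have hm := prod_pow_sub_pow_mul_qPoch q a k
  have hk := prod_pow_sub_pow_mul_qPoch q 0 k
  simp only [zero_add, qPoch, range_zero, prod_empty, mul_one] at hk
  have hsign : (-1) ^ k * q ^ (∑ i ∈ range k, i) ≠ 0 := by positivity
  rw [hk, ← qPoch, qBinomial, Nat.add_sub_cancel, div_eq_div_iff (by simp [hsign, qPoch_ne_zero hq])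
    (by simp [qPoch_ne_zero hq])]
  linear_combination qPoch q k * hm

lemma qBinomial_mul_qBinomial_mul_qBinomial {q : ℚ} (hq : 1 < q) (a b c d : ℕ) :
    qBinomial q (a + b + c + d) (a + b) * (qBinomial q (a + b) b * qBinomial q (c + d) c) =
      qMultinom4 q (a + b + c + d) a b c d := by
  have := qPoch_ne_zero hq
  rw [qBinomial, qBinomial, qBinomial, qMultinom4, show a + b + c + d - (a + b) = c + d by omega,
    Nat.add_sub_cancel, Nat.add_sub_cancel_left, div_mul_div_comm, div_mul_div_comm,
    div_eq_div_iff (by simp [this]) (by simp [this])]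
  ring

lemma natCast_prod_pow_sub_pow {q m d : ℕ} (hq : 0 < q) (hd : d ≤ m) :
    ((∏ i : Fin d, (q ^ m - q ^ (i : ℕ)) : ℕ) : ℚ) = ∏ i ∈ range d, ((q : ℚ) ^ m - q ^ i) := by
  rw [Nat.cast_prod, ← Fin.prod_univ_eq_prod_range (fun i => (q : ℚ) ^ m - q ^ i)]
  refine Fintype.prod_congr _ _ fun i => ?_
  rw [Nat.cast_sub (Nat.pow_le_pow_right hq (by omega))]
  push_cast
  rfl

def Equiv.subtypeAndSndEqEquiv {α β : Type*} (P : α × β → Prop) (b : β) :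
    {p : α × β // P p ∧ p.2 = b} ≃ {a // P (a, b)} where
  toFun p := ⟨p.1.1, by obtain ⟨⟨a, b⟩, h, rfl⟩ := p; exact h⟩
  invFun a := ⟨(a.1, b), a.2, rfl⟩
  left_inv := by rintro ⟨⟨a, b⟩, h, rfl⟩; rfl
  right_inv _ := rfl

lemma natCast_card_subtype_eq_mul {R α β : Type*} [CommSemiring R] [Finite α] [Finite β]
    {P : α → Prop} {Q : β → Prop} (f : α → β) (hf : ∀ a, P a → Q (f a)) (c : R)
    (hfiber : ∀ b, Q b → (Nat.card {a // P a ∧ f a = b} : R) = c) :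
    (Nat.card {a // P a} : R) = Nat.card {b // Q b} * c := by
  classical
  have := Fintype.ofFinite α
  have := Fintype.ofFinite β
  simp only [Nat.card_eq_fintype_card, Fintype.card_subtype] at hfiber ⊢
  rw [card_eq_sum_card_fiberwise (f := f) (t := univ.filter Q) fun a ha => by
    simp only [coe_filter, mem_univ, true_and, Set.mem_ofPred_eq] at ha ⊢; exact hf a ha]
  rw [Nat.cast_sum, sum_congr rfl fun b hb => ?_, sum_const, nsmul_eq_mul]
  rw [filter_filter]
  exact hfiber b (by simpa using hb)

section Counting

variable {K V : Type*} [DivisionRing K] [AddCommGroup V] [Module K V]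

lemma natCard_mkQ_fiber (U : Submodule K V) (y : V ⧸ U) :
    Nat.card {v // U.mkQ v = y} = Nat.card U := by
  obtain ⟨v₀, rfl⟩ := U.mkQ_surjective y
  refine Nat.card_congr ⟨fun v => ⟨v - v₀, (Submodule.Quotient.eq U).mp v.2⟩,
    fun u => ⟨u + v₀, by simp⟩, fun v => Subtype.ext (by simp), fun u => by simp⟩

lemma finrank_map_mkQ_add_finrank [FiniteDimensional K V] {s W : Submodule K V} (h : s ≤ W) :
    finrank K (W.map s.mkQ) + finrank K s = finrank K W := by
  have := (s.mkQ.domRestrict W).finrank_range_add_finrank_ker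
  rwa [LinearMap.range_domRestrict, LinearMap.ker_domRestrict, ker_mkQ,
    (comapSubtypeEquivOfLe h).finrank_eq] at this

lemma finrank_comap_mkQ [FiniteDimensional K V] (s : Submodule K V) (y : Submodule K (V ⧸ s)) :
    finrank K (y.comap s.mkQ) = finrank K y + finrank K s := by
  have := finrank_map_mkQ_add_finrank (le_comap_mkQ s y)
  rw [map_comap_eq_of_surjective s.mkQ_surjective] at this
  omega

lemma disjoint_map_mkQ_iff {s x : Submodule K V} (hs : s ≤ x) (y : Submodule K (V ⧸ s)) :
    Disjoint y (x.map s.mkQ) ↔ x ⊓ y.comap s.mkQ = s := by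
  rw [disjoint_iff, ← (comap_injective_of_surjective s.mkQ_surjective).eq_iff, comap_inf,
    comap_map_mkQ, comap_bot, ker_mkQ, sup_eq_right.mpr hs, inf_comm]

lemma natCard_inf_eq_eq_natCard_quotient [FiniteDimensional K V] {s x : Submodule K V}
    (hs : s ≤ x) {r : ℕ} (hr : finrank K s ≤ r) :
    Nat.card {x₁ : Submodule K V // finrank K x₁ = r ∧ x ⊓ x₁ = s} =
      Nat.card {y : Submodule K (V ⧸ s) //
        finrank K y = r - finrank K s ∧ Disjoint y (x.map s.mkQ)} :=
  Nat.card_congr <|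
    (Equiv.subtypeSubtypeEquivSubtype fun h => h.2.symm.trans_le inf_le_right).symm.trans
    ((comapMkQRelIso s).toEquiv.subtypeEquiv fun y => by
      change _ ↔ finrank K (y.comap s.mkQ) = r ∧ x ⊓ y.comap s.mkQ = s
      rw [finrank_comap_mkQ, disjoint_map_mkQ_iff hs]
      exact and_congr_left' ⟨fun h => by omega, fun h => by omega⟩).symm

variable [Fintype K] [Finite V]

lemma natCard_linearIndependent_comp_mkQ (U : Submodule K V) (d : ℕ) :
    Nat.card {s : Fin d → V // LinearIndependent K (U.mkQ ∘ s)} =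
      Nat.card {t : Fin d → V ⧸ U // LinearIndependent K t} * Nat.card U ^ d := by
  have : Finite (V ⧸ U) := Module.finite_of_finite K
  refine natCast_card_subtype_eq_mul (R := ℕ) (P := fun s => LinearIndependent K (U.mkQ ∘ s))
    (Q := fun t => LinearIndependent K t) (U.mkQ ∘ ·) (fun _ hs => hs) _ fun t ht => ?_
  calc Nat.card {s : Fin d → V // LinearIndependent K (U.mkQ ∘ s) ∧ U.mkQ ∘ s = t}
      = Nat.card {s : Fin d → V // ∀ i, U.mkQ (s i) = t i} :=
        Nat.card_congr <| Equiv.subtypeEquivRight fun s =>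
          ⟨fun h => congrFun h.2, fun h => by
            obtain rfl : U.mkQ ∘ s = t := funext h
            exact ⟨ht, rfl⟩⟩
    _ = ∏ i, Nat.card {v // U.mkQ v = t i} := by
        rw [Nat.card_congr (Equiv.subtypePiEquivPi (p := fun i v => U.mkQ v = t i)), Nat.card_pi]
    _ = Nat.card U ^ d := by rw [Fintype.prod_congr _ _ fun i => natCard_mkQ_fiber U (t i)]; simp

lemma natCard_span_fiber {U W : Submodule K V} (hWU : Disjoint W U) {d : ℕ}
    (hW : finrank K W = d) :
    Nat.card {s : Fin d → V // LinearIndependent K (U.mkQ ∘ s) ∧ span K (Set.range s) = W} =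
      Nat.card {u : Fin d → W // LinearIndependent K u} := by
  have hindep (u : Fin d → W) :
      LinearIndependent K (U.mkQ ∘ W.subtype ∘ u) ↔ LinearIndependent K u := by
    rw [LinearMap.linearIndependent_iff_of_disjoint,
      LinearMap.linearIndependent_iff _ W.ker_subtype]
    rw [ker_mkQ]
    exact hWU.mono_left (span_le.mpr (by rintro _ ⟨i, rfl⟩; exact (u i).2))
  refine Nat.card_congr
    { toFun := fun s => ⟨fun i => ⟨s.1 i, s.2.2.le (subset_span (Set.mem_range_self i))⟩,
        (hindep _).mp s.2.1⟩
      invFun := fun u => ⟨W.subtype ∘ u.1, (hindep _).mpr u.2, ?_⟩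
      left_inv := fun _ => rfl
      right_inv := fun _ => rfl }
  refine eq_of_le_of_finrank_eq (span_le.mpr ?_) ?_
  · rintro _ ⟨i, rfl⟩; exact (u.1 i).2
  · rw [finrank_span_eq_card (u.2.map' _ W.ker_subtype), Fintype.card_fin, hW]

lemma natCard_disjoint_finrank_eq_mul (U : Submodule K V) {d : ℕ}
    (hd : finrank K U + d ≤ finrank K V) :
    Nat.card {W : Submodule K V // finrank K W = d ∧ Disjoint W U} *
        ∏ i : Fin d, (Fintype.card K ^ d - Fintype.card K ^ (i : ℕ)) =
      (∏ i : Fin d, (Fintype.card K ^ (finrank K V - finrank K U) - Fintype.card K ^ (i : ℕ))) *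
        Fintype.card K ^ (finrank K U * d) := by
  have : Finite (V ⧸ U) := Module.finite_of_finite K
  have hquot : finrank K (V ⧸ U) = finrank K V - finrank K U := by
    have := U.finrank_quotient_add_finrank; omega
  calc _ = Nat.card {s : Fin d → V // LinearIndependent K (U.mkQ ∘ s)} := by
        refine (natCast_card_subtype_eq_mul (R := ℕ)
          (Q := fun W : Submodule K V => finrank K W = d ∧ Disjoint W U)
          (fun s : Fin d → V => span K (Set.range s)) (fun s hs => ⟨?_, ?_⟩) _ fun W hW => ?_).symm
        · rw [finrank_span_eq_card hs.of_comp, Fintype.card_fin]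
        · simpa using Submodule.range_ker_disjoint hs
        · rw [natCard_span_fiber hW.2 hW.1, card_linearIndependent hW.1.ge, hW.1, Nat.cast_id]
    _ = Nat.card {t : Fin d → V ⧸ U // LinearIndependent K t} * Nat.card U ^ d :=
        natCard_linearIndependent_comp_mkQ U d
    _ = _ := by
        rw [card_linearIndependent (by omega), hquot, Module.natCard_eq_pow_finrank (K := K),
          Nat.card_eq_fintype_card, ← pow_mul]

lemma natCard_disjoint_finrank_eq (U : Submodule K V) {d : ℕ}
    (hd : finrank K U + d ≤ finrank K V) :
    (Nat.card {W : Submodule K V // finrank K W = d ∧ Disjoint W U} : ℚ) =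
      (Fintype.card K : ℚ) ^ (finrank K U * d) *
        qBinomial (Fintype.card K) (finrank K V - finrank K U) d := by
  have hq : 1 < (Fintype.card K : ℚ) := by exact_mod_cast Fintype.one_lt_card
  have h := congrArg (Nat.cast : ℕ → ℚ) (natCard_disjoint_finrank_eq_mul U hd)
  rw [Nat.cast_mul, Nat.cast_mul, natCast_prod_pow_sub_pow Fintype.card_pos le_rfl,
    natCast_prod_pow_sub_pow Fintype.card_pos (by omega), Nat.cast_pow] at h
  rw [← prod_pow_sub_pow_div hq (by omega), mul_div_assoc',
    eq_div_iff (prod_pow_self_sub_pow_ne_zero hq d)]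
  linear_combination h

lemma natCard_finrank_eq {k : ℕ} (hk : k ≤ finrank K V) :
    (Nat.card {W : Submodule K V // finrank K W = k} : ℚ) =
      qBinomial (Fintype.card K) (finrank K V) k := by
  simpa using natCard_disjoint_finrank_eq (⊥ : Submodule K V) (d := k) (by simpa)

lemma natCard_inf_eq {s x : Submodule K V} (hs : s ≤ x) {r : ℕ} (hr : finrank K s ≤ r)
    (hdim : finrank K x + r ≤ finrank K V + finrank K s) :
    (Nat.card {x₁ : Submodule K V // finrank K x₁ = r ∧ x ⊓ x₁ = s} : ℚ) =
      (Fintype.card K : ℚ) ^ ((finrank K x - finrank K s) * (r - finrank K s)) *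
        qBinomial (Fintype.card K) (finrank K V - finrank K x) (r - finrank K s) := by
  have : Finite (V ⧸ s) := Module.finite_of_finite K
  have hmap := finrank_map_mkQ_add_finrank hs
  have hquot := s.finrank_quotient_add_finrank
  rw [natCard_inf_eq_eq_natCard_quotient hs hr, natCard_disjoint_finrank_eq _ (by omega),
    show finrank K (x.map s.mkQ) = finrank K x - finrank K s by omega,
    show finrank K (V ⧸ s) - (finrank K x - finrank K s) = finrank K V - finrank K x by omega]

lemma natCard_le_finrank_eq (x : Submodule K V) {k : ℕ} (hk : k ≤ finrank K x) :
    (Nat.card {s : Submodule K V // s ≤ x ∧ finrank K s = k} : ℚ) =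
      qBinomial (Fintype.card K) (finrank K x) k := by
  rw [← natCard_finrank_eq hk]
  exact congrArg _ <| Nat.card_congr <| (Equiv.subtypeSubtypeEquivSubtypeInter _ _).symm.trans
    ((MapSubtype.orderIso x).toEquiv.subtypeEquiv fun s => by
      rw [← finrank_map_subtype_eq x s]; rfl).symm

lemma natCard_finrank_inf_add_eq {x₂ : Submodule K V} {r₁ r₂ t : ℕ} (hx₂ : finrank K x₂ = r₂)
    (ht : t ≤ r₂) (hr₂ : r₂ ≤ r₁ + t) (hr₁ : r₁ + t ≤ finrank K V) :
    (Nat.card {x₁ : Submodule K V //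
        finrank K x₁ = r₁ ∧ finrank K (x₂ ⊓ x₁ : Submodule K V) + t = r₂} : ℚ) =
      qBinomial (Fintype.card K) r₂ (r₂ - t) * ((Fintype.card K : ℚ) ^ (t * (r₁ + t - r₂)) *
        qBinomial (Fintype.card K) (finrank K V - r₂) (r₁ + t - r₂)) := by
  rw [natCast_card_subtype_eq_mul (Q := fun s => s ≤ x₂ ∧ finrank K s = r₂ - t) (x₂ ⊓ ·)
    (fun x₁ h => ⟨inf_le_left, by omega⟩) _ fun s hs => ?_,
    natCard_le_finrank_eq x₂ (by omega), hx₂]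
  rw [Nat.card_congr <| Equiv.subtypeEquivRight
      (q := fun x₁ : Submodule K V => finrank K x₁ = r₁ ∧ x₂ ⊓ x₁ = s) fun x₁ =>
      ⟨fun h => ⟨h.1.1, h.2⟩, fun h => ⟨⟨h.1, by rw [h.2, hs.2]; omega⟩, h.2⟩⟩,
    natCard_inf_eq hs.1 (by omega) (by omega), hs.2, hx₂,
    show r₂ - (r₂ - t) = t by omega, show r₁ - (r₂ - t) = r₁ + t - r₂ by omega]

lemma natCard_pairs_eq {r₁ r₂ t : ℕ} (ht : t ≤ r₂) (hr₂ : r₂ ≤ r₁ + t)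
    (hr₁ : r₁ + t ≤ finrank K V) :
    (Nat.card {p : Submodule K V × Submodule K V // finrank K p.1 = r₁ ∧ finrank K p.2 = r₂ ∧
        finrank K (p.2 ⊓ p.1 : Submodule K V) + t = r₂} : ℚ) =
      qBinomial (Fintype.card K) (finrank K V) r₂ * (qBinomial (Fintype.card K) r₂ (r₂ - t) *
        ((Fintype.card K : ℚ) ^ (t * (r₁ + t - r₂)) *
          qBinomial (Fintype.card K) (finrank K V - r₂) (r₁ + t - r₂))) := by
  rw [natCast_card_subtype_eq_mul (Q := fun x₂ : Submodule K V => finrank K x₂ = r₂) Prod.snd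
    (fun p hp => hp.2.1) _ fun x₂ hx₂ => ?fiber, natCard_finrank_eq (by omega)]
  case fiber =>
    rw [Nat.card_congr (Equiv.subtypeAndSndEqEquiv _ x₂)]
    simp only [hx₂, true_and]
    exact natCard_finrank_inf_add_eq hx₂ ht hr₂ hr₁

end Counting

theorem card_pairs_at_distance_general (q n r₁ r₂ t : ℕ) (K : Type*) [Field K] [Fintype K]
    (hq : Fintype.card K = q)
    (Ω : Type*) [AddCommGroup Ω] [Module K Ω] [FiniteDimensional K Ω]
    (hn : Module.finrank K Ω = n) (hr₁ : r₁ ≤ n)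
    (htlo : max 0 (r₂ - r₁) ≤ t) (hthi : t ≤ min r₂ (n - r₁)) :
    (Nat.card {p : Submodule K Ω × Submodule K Ω //
        Module.finrank K p.1 = r₁ ∧ Module.finrank K p.2 = r₂ ∧
        Module.finrank K (p.2 ⊓ p.1 : Submodule K Ω) + t = r₂} : ℚ) =
      (q : ℚ) ^ (t * (r₁ + t - r₂)) *
        qMultinom4 (q : ℚ) n t (r₂ - t) (r₁ + t - r₂) (n - r₁ - t) := by
  subst hq hn
  have : Finite Ω := Module.finite_of_finite K
  have ht : t ≤ r₂ := hthi.trans (min_le_left _ _)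
  have hr₂ : r₂ ≤ r₁ + t := by have := (le_max_right _ _).trans htlo; omega
  have hr₁t : r₁ + t ≤ finrank K Ω := by have := hthi.trans (min_le_right _ _); omega
  have key := qBinomial_mul_qBinomial_mul_qBinomial (q := Fintype.card K)
    (by exact_mod_cast Fintype.one_lt_card) t (r₂ - t) (r₁ + t - r₂) (finrank K Ω - r₁ - t)
  rw [show t + (r₂ - t) = r₂ by omega,
    show r₂ + (r₁ + t - r₂) + (finrank K Ω - r₁ - t) = finrank K Ω by omega,
    show r₁ + t - r₂ + (finrank K Ω - r₁ - t) = finrank K Ω - r₂ by omega] at key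
  rw [natCard_pairs_eq ht hr₂ hr₁t, ← key]
  ring

/-- The number of pairs `(x₁, x₂)` of subspaces of an `n`-dimensional `F_q`-vector space
with `dim x₁ = r₁`, `dim x₂ = r₂` and `∂(x₂,x₁) = dim(x₂/(x₂∩x₁)) = t` equals
`q^{t(r₁-r₂+t)} [n choose t, r₂-t, r₁-r₂+t, n-r₁-t]_q`. -/
theorem card_pairs_at_distance (q n r₁ r₂ t : ℕ) (K : Type*) [Field K] [Fintype K]
    (hq : Fintype.card K = q)
    (Ω : Type*) [AddCommGroup Ω] [Module K Ω] [FiniteDimensional K Ω]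
    (hn : Module.finrank K Ω = n) (hr₁ : r₁ ≤ n) (hr₂ : r₂ ≤ n)
    (htlo : max 0 (r₂ - r₁) ≤ t) (hthi : t ≤ min r₂ (n - r₁)) :
    (Nat.card {p : Submodule K Ω × Submodule K Ω //
        Module.finrank K p.1 = r₁ ∧ Module.finrank K p.2 = r₂ ∧
        Module.finrank K (p.2 ⊓ p.1 : Submodule K Ω) + t = r₂} : ℚ) =
      (q : ℚ) ^ (t * (r₁ + t - r₂)) *
        qMultinom4 (q : ℚ) n t (r₂ - t) (r₁ + t - r₂) (n - r₁ - t) :=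
  card_pairs_at_distance_general q n r₁ r₂ t K hq Ω hn hr₁ htlo hthi
end

section
/- For the Grassmann graph on r-dimensional subspaces of an n-dimensional F_q-vector space, γ₁(T, X_r) = q^{n-2}(q-1), where T is the set of transvections {1 + ω⊗α : α ∈ Ω* \ {0}, ω ∈ Ker(α) \ {0}} and γ₁(T, X_r) is the common cardinality of the sets {h ∈ T : hx = y} over pairs (x,y) of r-dimensional subspaces at Grassmann distance 1. -/
open Module Submodule

private lemma natCard_of_finrank (K M : Type*) [Field K] [Fintype K] [AddCommGroup M]
    [Module K M] [FiniteDimensional K M] :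
    Nat.card M = Fintype.card K ^ Module.finrank K M := by
  have : Finite M := Module.finite_of_finite K
  letI : Fintype M := Fintype.ofFinite M
  rw [Nat.card_eq_fintype_card]
  exact card_eq_pow_finrank

private lemma sup_span_shift {K Ω : Type*} [Field K] [AddCommGroup Ω] [Module K Ω]
    (p : Submodule K Ω) (a b : Ω) (hb : b ∈ p) :
    p ⊔ span K {a + b} = p ⊔ span K {a} := by
  apply le_antisymm
  · refine sup_le le_sup_left (span_le.2 (Set.singleton_subset_iff.2 ?_))
    exact add_mem (mem_sup_right (mem_span_singleton_self a)) (mem_sup_left hb)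
  · refine sup_le le_sup_left (span_le.2 (Set.singleton_subset_iff.2 ?_))
    have h2 : a + b - b ∈ p ⊔ span K {a + b} :=
      sub_mem (mem_sup_right (mem_span_singleton_self _)) (mem_sup_left hb)
    simpa using h2

/-- For the Grassmann graph on `r`-dimensional subspaces of an `n`-dimensional
`F_q`-vector space, for any pair `(x, y)` of `r`-dimensional subspaces at Grassmann
distance `1`, the number of transvections `h = 1 + ω ⊗ α` with `h·x = y` equals
`q^{n-2}(q-1)`. -/
theorem card_transvections_moving (q n r : ℕ) (K : Type*) [Field K] [Fintype K]
    (hq : Fintype.card K = q)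
    (Ω : Type*) [AddCommGroup Ω] [Module K Ω] [FiniteDimensional K Ω]
    (hn : Module.finrank K Ω = n) (hn2 : 2 ≤ n)
    (x y : Submodule K Ω) (hx : Module.finrank K x = r) (hy : Module.finrank K y = r)
    (hdist : Module.finrank K (x ⊓ y : Submodule K Ω) + 1 = r) :
    Nat.card {h : Ω →ₗ[K] Ω //
        (∃ (α : Ω →ₗ[K] K) (ω : Ω), α ≠ 0 ∧ ω ≠ 0 ∧ ω ∈ LinearMap.ker α ∧
          h = LinearMap.id + α.smulRight ω) ∧
        Submodule.map h x = y} = q ^ (n - 2) * (q - 1) := by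
  classical
  set z : Submodule K Ω := x ⊓ y with hzdef
  have hzx : z ≤ x := inf_le_left
  have hzy : z ≤ y := inf_le_right
  have hzr : Module.finrank K z + 1 = r := hdist
  have hxy : x ≠ y := by
    intro h
    rw [h, inf_idem] at hzdef
    rw [hzdef, hy] at hzr
    omega
  have hzltx : z < x := lt_of_le_of_ne hzx (by intro h; rw [h, hx] at hzr; omega)
  have hzlty : z < y := lt_of_le_of_ne hzy (by intro h; rw [h, hy] at hzr; omega)
  obtain ⟨u, hux, huz⟩ := SetLike.exists_of_lt hzltx
  obtain ⟨v, hvy, hvz⟩ := SetLike.exists_of_lt hzlty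
  have huy : u ∉ y := fun h => huz (Submodule.mem_inf.2 ⟨hux, h⟩)
  have hvx : v ∉ x := fun h => hvz (Submodule.mem_inf.2 ⟨h, hvy⟩)
  have hu0 : u ≠ 0 := fun h => huz (h ▸ z.zero_mem)
  have hv0 : v ≠ 0 := fun h => hvz (h ▸ z.zero_mem)
  -- x = z ⊔ span u, y = z ⊔ span v
  have hspan : ∀ (p : Submodule K Ω) (w : Ω), w ∈ p → w ∉ z → z ≤ p →
      Module.finrank K p = r → z ⊔ span K {w} = p := by
    intro p w hwp hwz hzp hp
    have hw0 : w ≠ 0 := fun h => hwz (h ▸ z.zero_mem)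
    have hle : z ⊔ span K {w} ≤ p := sup_le hzp (span_le.2 (Set.singleton_subset_iff.2 hwp))
    have hlt : z < z ⊔ span K {w} :=
      lt_of_le_of_ne le_sup_left (fun h => hwz (h ▸ mem_sup_right (mem_span_singleton_self w)))
    have h1 : Module.finrank K z < Module.finrank K (z ⊔ span K {w} : Submodule K Ω) :=
      Submodule.finrank_lt_finrank_of_lt hlt
    have h2 : Module.finrank K (z ⊔ span K {w} : Submodule K Ω)
        + Module.finrank K (z ⊓ span K {w} : Submodule K Ω)
        = Module.finrank K z + Module.finrank K (span K {w} : Submodule K Ω) :=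
      Submodule.finrank_sup_add_finrank_inf_eq z (span K {w})
    rw [finrank_span_singleton hw0] at h2
    exact Submodule.eq_of_le_of_finrank_le hle (by omega)
  have hxspan : z ⊔ span K {u} = x := hspan x u hux huz hzx hx
  have hyspan : z ⊔ span K {v} = y := hspan y v hvy hvz hzy hy
  -- main construction: every admissible (α, z₁) gives an element of the set
  have hmain : ∀ (α : Ω →ₗ[K] K), (∀ w ∈ z, α w = 0) → α u = 1 → α v ≠ 0 → ∀ z₁ ∈ z,
      ((∃ (β : Ω →ₗ[K] K) (ω : Ω), β ≠ 0 ∧ ω ≠ 0 ∧ ω ∈ LinearMap.ker β ∧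
        (LinearMap.id + α.smulRight ((α v)⁻¹ • v + z₁ - u))
          = LinearMap.id + β.smulRight ω) ∧
       Submodule.map (LinearMap.id + α.smulRight ((α v)⁻¹ • v + z₁ - u)) x = y) := by
    intro α hαz hαu hαv z₁ hz₁
    set ω : Ω := (α v)⁻¹ • v + z₁ - u with hω
    set h : Ω →ₗ[K] Ω := LinearMap.id + α.smulRight ω with hh
    have hωy' : (α v)⁻¹ • v + z₁ ∈ y := add_mem (smul_mem _ _ hvy) (hzy hz₁)
    have hωne : ω ≠ 0 := by
      intro h0
      exact huy ((sub_eq_zero.mp h0) ▸ hωy')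
    have hαω : α ω = 0 := by
      rw [hω]
      rw [map_sub, map_add, map_smul, hαu, hαz z₁ hz₁, smul_eq_mul,
        inv_mul_cancel₀ hαv]
      ring
    have happ : ∀ w, h w = w + α w • ω := by
      intro w; simp [hh]
    have hfix : ∀ w ∈ z, h w = w := by
      intro w hw; rw [happ, hαz w hw, zero_smul, add_zero]
    refine ⟨⟨α, ω, fun h0 => by simp [h0] at hαu, hωne, LinearMap.mem_ker.2 hαω, rfl⟩, ?_⟩
    have h1 : Submodule.map h z = z := by
      apply le_antisymm
      · rintro _ ⟨w, hw, rfl⟩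
        rw [hfix w hw]; exact hw
      · intro w hw; exact ⟨w, hw, hfix w hw⟩
    have h2 : h u = (α v)⁻¹ • v + z₁ := by
      rw [happ, hαu, one_smul, hω]; abel
    calc Submodule.map h x = Submodule.map h (z ⊔ span K {u}) := by rw [hxspan]
      _ = Submodule.map h z ⊔ Submodule.map h (span K {u}) := Submodule.map_sup _ _ _
      _ = z ⊔ span K {h u} := by rw [h1, Submodule.map_span, Set.image_singleton]
      _ = z ⊔ span K {(α v)⁻¹ • v + z₁} := by rw [h2]
      _ = z ⊔ span K {(α v)⁻¹ • v} := sup_span_shift z _ z₁ hz₁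
      _ = z ⊔ span K {v} := by
          rw [span_singleton_smul_eq (IsUnit.mk0 _ (inv_ne_zero hαv)) v]
      _ = y := hyspan
  have hωney : ∀ (c : K) (z₁ : Ω), z₁ ∈ z → c • v + z₁ - u ≠ 0 := by
    intro c z₁ hz₁ h0
    exact huy ((sub_eq_zero.mp h0) ▸ add_mem (smul_mem _ _ hvy) (hzy hz₁))
  let A : Type _ := {α : Ω →ₗ[K] K // (∀ w ∈ z, α w = 0) ∧ α u = 1 ∧ α v ≠ 0}
  let F : A × z → {h : Ω →ₗ[K] Ω //
      (∃ (β : Ω →ₗ[K] K) (ω : Ω), β ≠ 0 ∧ ω ≠ 0 ∧ ω ∈ LinearMap.ker β ∧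
        h = LinearMap.id + β.smulRight ω) ∧ Submodule.map h x = y} :=
    fun p => ⟨LinearMap.id + p.1.1.smulRight ((p.1.1 v)⁻¹ • v + p.2.1 - u),
      hmain p.1.1 p.1.2.1 p.1.2.2.1 p.1.2.2.2 p.2.1 p.2.2⟩
  have hFinj : Function.Injective F := by
    rintro ⟨⟨α, hα1, hα2, hα3⟩, ⟨z₁, hz₁⟩⟩ ⟨⟨α', hα1', hα2', hα3'⟩, ⟨z₁', hz₁'⟩⟩ hFeq
    have heq : LinearMap.id + α.smulRight ((α v)⁻¹ • v + z₁ - u)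
        = LinearMap.id + α'.smulRight ((α' v)⁻¹ • v + z₁' - u) := congrArg Subtype.val hFeq
    have happw : ∀ w : Ω, w + α w • ((α v)⁻¹ • v + z₁ - u)
        = w + α' w • ((α' v)⁻¹ • v + z₁' - u) := by
      intro w
      have := LinearMap.congr_fun heq w
      simpa using this
    have hωeq : (α v)⁻¹ • v + z₁ - u = (α' v)⁻¹ • v + z₁' - u := by
      have := happw u
      rwa [hα2, hα2', one_smul, one_smul, add_right_inj] at this
    have hωne : (α v)⁻¹ • v + z₁ - u ≠ 0 := hωney _ _ hz₁
    have hαeq : α = α' := by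
      ext w
      have := happw w
      rw [← hωeq, add_right_inj] at this
      by_contra hne
      exact hωne (by
        have := sub_eq_zero.mpr this
        rw [← sub_smul] at this
        exact (smul_eq_zero.mp this).resolve_left (sub_ne_zero.mpr hne))
    have hz₁eq : z₁ = z₁' := by
      rw [hαeq] at hωeq
      have := hωeq
      rwa [sub_left_inj, add_right_inj] at this
    subst hαeq; subst hz₁eq; rfl
  have hFsurj : Function.Surjective F := by
    rintro ⟨h, ⟨α₀, ω₀, hα₀, hω₀, hker, hh⟩, hmap⟩
    have happ : ∀ w, h w = w + α₀ w • ω₀ := by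
      intro w; rw [hh]; simp
    have hmapy : ∀ w ∈ x, h w ∈ y := by
      intro w hw; rw [← hmap]; exact Submodule.mem_map_of_mem hw
    have hαu : α₀ u ≠ 0 := by
      intro h0
      apply huy
      have := hmapy u hux
      rwa [happ, h0, zero_smul, add_zero] at this
    set c := α₀ u with hc
    set α : Ω →ₗ[K] K := c⁻¹ • α₀ with hα
    set ω : Ω := c • ω₀ with hωdef
    have hαw : ∀ w, α w = c⁻¹ * α₀ w := fun w => rfl
    have hαu1 : α u = 1 := by rw [hαw, ← hc, inv_mul_cancel₀ hαu]
    have hω0 : ω ≠ 0 := smul_ne_zero hαu hω₀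
    have hsm : ∀ w, α w • ω = α₀ w • ω₀ := by
      intro w
      rw [hαw, hωdef, smul_smul]
      rw [mul_comm c⁻¹ (α₀ w), mul_assoc, inv_mul_cancel₀ hαu, mul_one]
    have hh2 : h = LinearMap.id + α.smulRight ω := by
      ext w
      simp only [LinearMap.add_apply, LinearMap.id_apply, LinearMap.smulRight_apply]
      rw [hsm, ← happ]
    have hαz : ∀ w ∈ z, α w = 0 := by
      intro w hw
      by_contra hne
      have hα₀w : α₀ w ≠ 0 := by
        intro h0; apply hne; rw [hαw, h0, mul_zero]
      have hωy : ω₀ ∈ y := by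
        have h3 : w + α₀ w • ω₀ ∈ y := by
          rw [← happ]; exact hmapy w (hzx hw)
        have h4 : α₀ w • ω₀ ∈ y := by
          have := sub_mem h3 (hzy hw)
          simpa using this
        have := smul_mem y (α₀ w)⁻¹ h4
        rwa [smul_smul, inv_mul_cancel₀ hα₀w, one_smul] at this
      have hxly : x ≤ y := by
        intro w' hw'
        have h5 := hmapy w' hw'
        rw [happ] at h5
        have := sub_mem h5 (smul_mem y (α₀ w') hωy)
        simpa using this
      exact hxy (Submodule.eq_of_le_of_finrank_le hxly (by rw [hx, hy]))
    have huωy : u + ω ∈ y := by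
      have := hmapy u hux
      rw [hh2] at this
      simpa [hαu1] using this
    rw [← hyspan] at huωy
    obtain ⟨z₁, hz₁, w2, hw2, hsum⟩ := Submodule.mem_sup.mp huωy
    obtain ⟨s, rfl⟩ := Submodule.mem_span_singleton.mp hw2
    have hαω : α ω = 0 := by
      rw [hαw, hωdef, map_smul, smul_eq_mul, LinearMap.mem_ker.mp hker, mul_zero, mul_zero]
    have hαuω : α (u + ω) = 1 := by rw [map_add, hαu1, hαω, add_zero]
    have hsv : s * α v = 1 := by
      rw [← hsum, map_add, hαz z₁ hz₁, map_smul, smul_eq_mul, zero_add] at hαuω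
      exact hαuω
    have hαv : α v ≠ 0 := by
      intro h0; rw [h0, mul_zero] at hsv; exact zero_ne_one hsv
    have hs : s = (α v)⁻¹ := eq_inv_of_mul_eq_one_left hsv
    have hωeq : ω = (α v)⁻¹ • v + z₁ - u := by
      have : u + ω = z₁ + (α v)⁻¹ • v := by rw [← hs, hsum]
      rw [eq_sub_iff_add_eq]
      rw [show (α v)⁻¹ • v + z₁ = z₁ + (α v)⁻¹ • v by abel, ← this]
      abel
    refine ⟨⟨⟨α, hαz, hαu1, hαv⟩, ⟨z₁, hz₁⟩⟩, ?_⟩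
    apply Subtype.ext
    show LinearMap.id + α.smulRight ((α v)⁻¹ • v + z₁ - u) = h
    rw [← hωeq, ← hh2]
  have hcard1 : Nat.card {h : Ω →ₗ[K] Ω //
      (∃ (β : Ω →ₗ[K] K) (ω : Ω), β ≠ 0 ∧ ω ≠ 0 ∧ ω ∈ LinearMap.ker β ∧
        h = LinearMap.id + β.smulRight ω) ∧ Submodule.map h x = y}
      = Nat.card (A × z) :=
    (Nat.card_congr (Equiv.ofBijective F ⟨hFinj, hFsurj⟩)).symm
  -- counting
  have hcz : Nat.card z = q ^ (r - 1) := by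
    rw [natCard_of_finrank K z, hq]
    congr 1
    omega
  -- build the two reference functionals
  obtain ⟨g, hgu, hgy⟩ := Submodule.exists_dual_map_eq_bot_of_notMem huy inferInstance
  obtain ⟨f, hfv, hfx⟩ := Submodule.exists_dual_map_eq_bot_of_notMem hvx inferInstance
  have hgy' : ∀ w ∈ y, g w = 0 := by
    intro w hw
    have : g w ∈ y.map g := Submodule.mem_map_of_mem hw
    rwa [hgy, Submodule.mem_bot] at this
  have hfx' : ∀ w ∈ x, f w = 0 := by
    intro w hw
    have : f w ∈ x.map f := Submodule.mem_map_of_mem hw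
    rwa [hfx, Submodule.mem_bot] at this
  set α₁ : Ω →ₗ[K] K := (g u)⁻¹ • g with hα₁def
  set α₂ : Ω →ₗ[K] K := (f v)⁻¹ • f with hα₂def
  have hα₁y : ∀ w ∈ y, α₁ w = 0 := by
    intro w hw; show (g u)⁻¹ * g w = 0; rw [hgy' w hw, mul_zero]
  have hα₂x : ∀ w ∈ x, α₂ w = 0 := by
    intro w hw; show (f v)⁻¹ * f w = 0; rw [hfx' w hw, mul_zero]
  have hα₁u : α₁ u = 1 := by show (g u)⁻¹ * g u = 1; rw [inv_mul_cancel₀ hgu]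
  have hα₂v : α₂ v = 1 := by show (f v)⁻¹ * f v = 1; rw [inv_mul_cancel₀ hfv]
  have hα₁v : α₁ v = 0 := hα₁y v hvy
  have hα₂u : α₂ u = 0 := hα₂x u hux
  set W : Submodule K Ω := x ⊔ y with hWdef
  set L : Submodule K (Ω →ₗ[K] K) := W.dualAnnihilator with hLdef
  have hLmem : ∀ β ∈ L, ∀ w ∈ W, β w = 0 := by
    intro β hβ; exact (Submodule.mem_dualAnnihilator β).mp hβ
  have hzW : z ≤ W := le_trans hzx le_sup_left
  -- the equivalence A ≃ {t // t ≠ 0} × L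
  let G : {t : K // t ≠ 0} × L → A := fun p =>
    ⟨α₁ + p.1.1 • α₂ + p.2.1, by
      refine ⟨?_, ?_, ?_⟩
      · intro w hw
        simp only [LinearMap.add_apply, LinearMap.smul_apply, smul_eq_mul]
        rw [hα₁y w (hzy hw), hα₂x w (hzx hw), hLmem p.2.1 p.2.2 w (hzW hw), mul_zero]
        ring
      · simp only [LinearMap.add_apply, LinearMap.smul_apply, smul_eq_mul]
        rw [hα₁u, hα₂u, hLmem p.2.1 p.2.2 u (le_sup_left (a := x) hux), mul_zero]
        ring
      · simp only [LinearMap.add_apply, LinearMap.smul_apply, smul_eq_mul]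
        rw [hα₁v, hα₂v, hLmem p.2.1 p.2.2 v (le_sup_right (b := y) hvy), mul_one]
        simpa using p.1.2⟩
  have hGinj : Function.Injective G := by
    rintro ⟨⟨t, ht⟩, ⟨β, hβ⟩⟩ ⟨⟨t', ht'⟩, ⟨β', hβ'⟩⟩ hGeq
    have heq : α₁ + t • α₂ + β = α₁ + t' • α₂ + β' := congrArg Subtype.val hGeq
    have htt : t = t' := by
      have := LinearMap.congr_fun heq v
      simp only [LinearMap.add_apply, LinearMap.smul_apply, smul_eq_mul] at this
      rwa [hα₁v, hα₂v, hLmem β hβ v (le_sup_right (b := y) hvy),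
        hLmem β' hβ' v (le_sup_right (b := y) hvy), mul_one, mul_one,
        zero_add, add_zero, zero_add, add_zero] at this
    subst htt
    have hββ : β = β' := by
      have := heq
      rwa [add_right_inj] at this
    subst hββ; rfl
  have hGsurj : Function.Surjective G := by
    rintro ⟨α, hα1, hα2, hα3⟩
    set t : K := α v with htdef
    set β : Ω →ₗ[K] K := α - α₁ - t • α₂ with hβdef
    have hβz : ∀ w ∈ z, β w = 0 := by
      intro w hw
      simp only [hβdef, LinearMap.sub_apply, LinearMap.smul_apply, smul_eq_mul]
      rw [hα1 w hw, hα₁y w (hzy hw), hα₂x w (hzx hw), mul_zero]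
      ring
    have hβu : β u = 0 := by
      simp only [hβdef, LinearMap.sub_apply, LinearMap.smul_apply, smul_eq_mul]
      rw [hα2, hα₁u, hα₂u, mul_zero]
      ring
    have hβv : β v = 0 := by
      simp only [hβdef, LinearMap.sub_apply, LinearMap.smul_apply, smul_eq_mul]
      rw [← htdef, hα₁v, hα₂v, mul_one]
      ring
    have hβx : ∀ w ∈ x, β w = 0 := by
      intro w hw
      rw [← hxspan] at hw
      obtain ⟨w1, hw1, w2, hw2, rfl⟩ := Submodule.mem_sup.mp hw
      obtain ⟨a, rfl⟩ := Submodule.mem_span_singleton.mp hw2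
      rw [map_add, hβz w1 hw1, map_smul, hβu, smul_zero, add_zero]
    have hβy : ∀ w ∈ y, β w = 0 := by
      intro w hw
      rw [← hyspan] at hw
      obtain ⟨w1, hw1, w2, hw2, rfl⟩ := Submodule.mem_sup.mp hw
      obtain ⟨a, rfl⟩ := Submodule.mem_span_singleton.mp hw2
      rw [map_add, hβz w1 hw1, map_smul, hβv, smul_zero, add_zero]
    have hβL : β ∈ L := by
      rw [hLdef, Submodule.mem_dualAnnihilator]
      intro w hw
      obtain ⟨w1, hw1, w2, hw2, rfl⟩ := Submodule.mem_sup.mp hw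
      rw [map_add, hβx w1 hw1, hβy w2 hw2, add_zero]
    refine ⟨⟨⟨t, hα3⟩, ⟨β, hβL⟩⟩, ?_⟩
    apply Subtype.ext
    show α₁ + t • α₂ + β = α
    rw [hβdef]
    abel
  have hcA : Nat.card A = Nat.card ({t : K // t ≠ 0} × L) :=
    (Nat.card_congr (Equiv.ofBijective G ⟨hGinj, hGsurj⟩)).symm
  -- card of the nonzero scalars
  have hct : Nat.card {t : K // t ≠ 0} = q - 1 := by
    rw [← Nat.card_congr (unitsEquivNeZero (G₀ := K)), Nat.card_units,
      Nat.card_eq_fintype_card, hq]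
  -- card of L
  have hWr : Module.finrank K W = r + 1 := by
    have h6 := Submodule.finrank_sup_add_finrank_inf_eq x y
    rw [hx, hy, ← hzdef, ← hWdef] at h6
    omega
  have hrn : r + 1 ≤ n := by
    have := Submodule.finrank_le W
    rw [hWr, hn] at this
    exact this
  have hLr : Module.finrank K L = n - (r + 1) := by
    have h7 : Module.finrank K L = Module.finrank K (Ω ⧸ W) :=
      (LinearEquiv.finrank_eq (Subspace.quotEquivAnnihilator W)).symm
    have h8 := Submodule.finrank_quotient_add_finrank W
    rw [hWr, hn] at h8
    omega
  have hcL : Nat.card L = q ^ (n - (r + 1)) := by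
    rw [natCard_of_finrank K L, hq, hLr]
  rw [hcard1, Nat.card_prod, hcA, Nat.card_prod, hct, hcL, hcz]
  have hexp : n - (r + 1) + (r - 1) = n - 2 := by omega
  rw [mul_assoc, ← pow_add, hexp, mul_comm]
end

section
/- Let x₁, x₂ be subspaces of an F_q-vector space with dim x₂ = r₂, let z ⊂ x₂ with dim z = r₂ - 1, let ω ∉ x₂, and set y = z ⊕ F_q·ω. Then ∂(y, x₁) = ∂(x₂, x₁) + 1 if and only if (x₁ ∩ x₂ ⊄ z and ω ∉ x₁ + x₂), where ∂(a,b) = dim(a/(a∩b)). -/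
lemma aux_codim {K Ω : Type*} [Field K] [AddCommGroup Ω] [Module K Ω]
    [FiniteDimensional K Ω] (z w x₁ : Submodule K Ω) (hzw : z ≤ w)
    (hwdim : Module.finrank K w = Module.finrank K z + 1) :
    (Module.finrank K (w ⊓ x₁ : Submodule K Ω) ≤ Module.finrank K (z ⊓ x₁ : Submodule K Ω) + 1
     ∧ Module.finrank K (z ⊓ x₁ : Submodule K Ω) ≤ Module.finrank K (w ⊓ x₁ : Submodule K Ω))
    ∧ (Module.finrank K (w ⊓ x₁ : Submodule K Ω) = Module.finrank K (z ⊓ x₁ : Submodule K Ω)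
        ↔ w ⊓ x₁ ≤ z) := by
  have hle : z ⊓ x₁ ≤ w ⊓ x₁ := inf_le_inf_right x₁ hzw
  have hmono := Submodule.finrank_mono hle
  have hkey := Submodule.finrank_sup_add_finrank_inf_eq (w ⊓ x₁) z
  have h1 : (w ⊓ x₁) ⊓ z = z ⊓ x₁ := by
    rw [inf_comm (w ⊓ x₁) z, ← inf_assoc, inf_eq_left.mpr hzw]
  have hsup : (w ⊓ x₁) ⊔ z ≤ w := sup_le inf_le_left hzw
  have h2 := Submodule.finrank_mono hsup
  have h3 : Module.finrank K z ≤ Module.finrank K ((w ⊓ x₁) ⊔ z : Submodule K Ω) :=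
    Submodule.finrank_mono le_sup_right
  rw [h1] at hkey
  refine ⟨⟨by omega, hmono⟩, ?_, ?_⟩
  · intro heq
    have heq2 : z ⊓ x₁ = w ⊓ x₁ :=
      Submodule.eq_of_le_of_finrank_le hle (le_of_eq heq)
    rw [← heq2]
    exact inf_le_left
  · intro h
    have hle2 : w ⊓ x₁ ≤ z ⊓ x₁ := le_inf h inf_le_right
    exact le_antisymm (Submodule.finrank_mono hle2) hmono

/-- Let `z ⊂ x₂` with `dim z = dim x₂ - 1`, `ω ∉ x₂`, and `y = z ⊕ F_q·ω`. Writing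
`∂(a,b) = dim a - dim(a∩b)`, one has `∂(y,x₁) = ∂(x₂,x₁) + 1` iff
(`x₁ ∩ x₂ ⊄ z` and `ω ∉ x₁ + x₂`). -/
theorem distance_up_iff (q : ℕ) (K : Type*) [Field K] [Fintype K]
    (hq : Fintype.card K = q)
    (Ω : Type*) [AddCommGroup Ω] [Module K Ω] [FiniteDimensional K Ω]
    (x₁ x₂ z : Submodule K Ω) (hz : z ≤ x₂)
    (hzdim : Module.finrank K z + 1 = Module.finrank K x₂)
    (ω : Ω) (hω : ω ∉ x₂)
    (y : Submodule K Ω) (hy : y = z ⊔ Submodule.span K {ω}) :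
    Module.finrank K y - Module.finrank K (y ⊓ x₁ : Submodule K Ω) =
        (Module.finrank K x₂ - Module.finrank K (x₂ ⊓ x₁ : Submodule K Ω)) + 1 ↔
      (¬ x₁ ⊓ x₂ ≤ z ∧ ω ∉ x₁ ⊔ x₂) := by
  have hωz : ω ∉ z := fun h => hω (hz h)
  have hω0 : ω ≠ 0 := fun h => hω (h ▸ x₂.zero_mem)
  have hzy : z ≤ y := hy ▸ le_sup_left
  have hωy : ω ∈ y := hy ▸ Submodule.mem_sup_right (Submodule.mem_span_singleton_self ω)
  have hdis : Disjoint z (Submodule.span K {ω}) :=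
    (Submodule.disjoint_span_singleton' hω0).mpr hωz
  have hydim : Module.finrank K y = Module.finrank K z + 1 := by
    have hk := Submodule.finrank_sup_add_finrank_inf_eq z (Submodule.span K {ω})
    rw [hdis.eq_bot, finrank_bot, finrank_span_singleton hω0, ← hy] at hk
    omega
  obtain ⟨⟨hb1, hb2⟩, hbiff⟩ := aux_codim z x₂ x₁ hz hzdim.symm
  obtain ⟨⟨hc1, hc2⟩, hciff⟩ := aux_codim z y x₁ hzy hydim
  have haz : Module.finrank K (z ⊓ x₁ : Submodule K Ω) ≤ Module.finrank K z :=
    Submodule.finrank_mono inf_le_left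
  -- y ⊓ x₁ ≤ z ↔ ω ∉ x₁ ⊔ z
  have hyx : (y ⊓ x₁ ≤ z) ↔ ω ∉ x₁ ⊔ z := by
    constructor
    · intro h hmem
      obtain ⟨v, hv, u, hu, hvu⟩ := Submodule.mem_sup.mp hmem
      have hvy : v ∈ y ⊓ x₁ := by
        refine ⟨?_, hv⟩
        have : v = ω - u := by rw [← hvu]; abel
        rw [this]
        exact Submodule.sub_mem y hωy (hzy hu)
      have := h hvy
      apply hωz
      rw [← hvu]
      exact Submodule.add_mem z this hu
    · intro h v hv
      by_contra hvz
      obtain ⟨hv1, hv2⟩ := hv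
      rw [hy] at hv1
      obtain ⟨u, hu, w, hw, huw⟩ := Submodule.mem_sup.mp hv1
      obtain ⟨c, rfl⟩ := Submodule.mem_span_singleton.mp hw
      have hc : c ≠ 0 := by
        rintro rfl
        apply hvz
        rw [← huw, zero_smul, add_zero]
        exact hu
      apply h
      have : ω = c⁻¹ • v - c⁻¹ • u := by
        rw [← huw, smul_add, smul_smul, inv_mul_cancel₀ hc, one_smul]
        abel
      rw [this]
      exact Submodule.sub_mem _ (Submodule.mem_sup_left (Submodule.smul_mem _ _ hv2))
        (Submodule.mem_sup_right (Submodule.smul_mem _ _ hu))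
  -- given x₁ ⊓ x₂ ⊄ z : x₁ ⊔ z = x₁ ⊔ x₂
  have hsups : ¬ (x₂ ⊓ x₁ ≤ z) → x₁ ⊔ z = x₁ ⊔ x₂ := by
    intro h
    obtain ⟨p, hp, hpz⟩ := SetLike.not_le_iff_exists.mp h
    obtain ⟨hpx₂, hpx₁⟩ := Submodule.mem_inf.mp hp
    have hp0 : p ≠ 0 := fun h0 => hpz (h0 ▸ z.zero_mem)
    have hdisp : Disjoint z (Submodule.span K {p}) :=
      (Submodule.disjoint_span_singleton' hp0).mpr hpz
    have hle : z ⊔ Submodule.span K {p} ≤ x₂ :=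
      sup_le hz ((Submodule.span_singleton_le_iff_mem p x₂).mpr hpx₂)
    have hdim : Module.finrank K (z ⊔ Submodule.span K {p} : Submodule K Ω) =
        Module.finrank K z + 1 := by
      have hk := Submodule.finrank_sup_add_finrank_inf_eq z (Submodule.span K {p})
      rw [hdisp.eq_bot, finrank_bot, finrank_span_singleton hp0] at hk
      omega
    have hx2eq : z ⊔ Submodule.span K {p} = x₂ :=
      Submodule.eq_of_le_of_finrank_le hle (by omega)
    apply le_antisymm (sup_le le_sup_left (le_trans hz le_sup_right))
    refine sup_le le_sup_left ?_
    rw [← hx2eq]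
    exact sup_le le_sup_right
      (le_trans ((Submodule.span_singleton_le_iff_mem p x₁).mpr hpx₁) le_sup_left)
  rw [hydim, ← hzdim]
  constructor
  · intro heq
    have hbval : ¬ (x₂ ⊓ x₁ ≤ z) := by
      intro hle
      have := hbiff.mpr hle
      omega
    have hcval : Module.finrank K (y ⊓ x₁ : Submodule K Ω) =
        Module.finrank K (z ⊓ x₁ : Submodule K Ω) := by
      have : Module.finrank K (x₂ ⊓ x₁ : Submodule K Ω) =
          Module.finrank K (z ⊓ x₁ : Submodule K Ω) + 1 := by
        rcases Nat.lt_or_ge (Module.finrank K (x₂ ⊓ x₁ : Submodule K Ω))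
          (Module.finrank K (z ⊓ x₁ : Submodule K Ω) + 1) with h | h
        · exfalso; exact hbval (hbiff.mp (by omega))
        · omega
      omega
    refine ⟨fun h => hbval (le_trans (le_of_eq (inf_comm x₂ x₁)) h), ?_⟩
    rw [← hsups hbval]
    exact hyx.mp (hciff.mp hcval)
  · rintro ⟨h1, h2⟩
    have hbval : ¬ (x₂ ⊓ x₁ ≤ z) := fun h => h1 (le_trans (le_of_eq (inf_comm x₁ x₂)) h)
    have hb : Module.finrank K (x₂ ⊓ x₁ : Submodule K Ω) =
        Module.finrank K (z ⊓ x₁ : Submodule K Ω) + 1 := by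
      rcases Nat.lt_or_ge (Module.finrank K (x₂ ⊓ x₁ : Submodule K Ω))
        (Module.finrank K (z ⊓ x₁ : Submodule K Ω) + 1) with h | h
      · exfalso; exact hbval (hbiff.mp (by omega))
      · omega
    have h2' : ω ∉ x₁ ⊔ z := by rw [hsups hbval]; exact h2
    have hc : Module.finrank K (y ⊓ x₁ : Submodule K Ω) =
        Module.finrank K (z ⊓ x₁ : Submodule K Ω) := hciff.mpr (hyx.mpr h2')
    omega
end

section
/- Let x₁, x₂ be subspaces of an F_q-vector space with dim x₂ = r₂, let z ⊂ x₂ with dim z = r₂ - 1, let ω ∉ x₂, and set y = z ⊕ F_q·ω. Then ∂(y, x₁) = ∂(x₂, x₁) − 1 if and only if (x₁ ∩ x₂ ⊆ z and ω ∈ x₁ + z), and in that case dim(x₁ + z) = dim(x₁ + x₂) − 1 and z = (x₁ + z) ∩ x₂. -/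
/-- Let `z ⊂ x₂` with `dim z = dim x₂ - 1`, `ω ∉ x₂`, and `y = z ⊕ F_q·ω`. Writing
`∂(a,b) = dim a - dim(a∩b)`, one has `∂(y,x₁) = ∂(x₂,x₁) - 1` iff
(`x₁ ∩ x₂ ⊆ z` and `ω ∈ x₁ + z`); in that case `dim(x₁+z) = dim(x₁+x₂) - 1` and
`z = (x₁+z) ∩ x₂`. -/
theorem distance_down_iff (q : ℕ) (K : Type*) [Field K] [Fintype K]
    (hq : Fintype.card K = q)
    (Ω : Type*) [AddCommGroup Ω] [Module K Ω] [FiniteDimensional K Ω]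
    (x₁ x₂ z : Submodule K Ω) (hz : z ≤ x₂)
    (hzdim : Module.finrank K z + 1 = Module.finrank K x₂)
    (ω : Ω) (hω : ω ∉ x₂)
    (y : Submodule K Ω) (hy : y = z ⊔ Submodule.span K {ω}) :
    ((Module.finrank K y - Module.finrank K (y ⊓ x₁ : Submodule K Ω)) + 1 =
        Module.finrank K x₂ - Module.finrank K (x₂ ⊓ x₁ : Submodule K Ω) ↔
      (x₁ ⊓ x₂ ≤ z ∧ ω ∈ x₁ ⊔ z)) ∧
    ((x₁ ⊓ x₂ ≤ z ∧ ω ∈ x₁ ⊔ z) →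
      Module.finrank K (x₁ ⊔ z : Submodule K Ω) + 1 =
          Module.finrank K (x₁ ⊔ x₂ : Submodule K Ω) ∧
        z = (x₁ ⊔ z) ⊓ x₂) := by
  subst hy
  set Kω := Submodule.span K {ω} with hKω
  have hω0 : ω ≠ 0 := fun h => hω (h ▸ x₂.zero_mem)
  have hωz : ω ∉ z := fun h => hω (hz h)
  have hspan : Module.finrank K Kω = 1 := finrank_span_singleton hω0
  have hdisj : ∀ p : Submodule K Ω, ω ∉ p → p ⊓ Kω = ⊥ := by
    intro p hp
    rw [eq_bot_iff]
    rintro v ⟨hv1, hv2⟩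
    obtain ⟨c, rfl⟩ := Submodule.mem_span_singleton.mp hv2
    rcases eq_or_ne c 0 with rfl | hc
    · simp
    · exact absurd (by simpa [smul_smul, inv_mul_cancel₀ hc] using p.smul_mem c⁻¹ hv1) hp
  -- dim y = dim z + 1
  have hy_dim : Module.finrank K (z ⊔ Kω : Submodule K Ω) = Module.finrank K z + 1 := by
    have h := Submodule.finrank_sup_add_finrank_inf_eq z Kω
    rw [hdisj z hωz, finrank_bot, hspan] at h
    omega
  -- dim (x₂ ⊔ Kω) = dim x₂ + 1
  have hx2ω_dim : Module.finrank K (x₂ ⊔ Kω : Submodule K Ω) = Module.finrank K x₂ + 1 := by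
    have h := Submodule.finrank_sup_add_finrank_inf_eq x₂ Kω
    rw [hdisj x₂ hω, finrank_bot, hspan] at h
    omega
  -- y ⊓ x₂ = z
  have hyx2 : (z ⊔ Kω) ⊓ x₂ = z := by
    refine le_antisymm ?_ (le_inf le_sup_left hz)
    rintro v ⟨hv1, hv2⟩
    obtain ⟨u, hu, w, hw, rfl⟩ := Submodule.mem_sup.mp hv1
    obtain ⟨c, rfl⟩ := Submodule.mem_span_singleton.mp hw
    rcases eq_or_ne c 0 with rfl | hc
    · simpa using hu
    · exfalso
      apply hω
      have hcu : c • ω ∈ x₂ := by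
        have := x₂.sub_mem hv2 (hz hu); simpa using this
      simpa [smul_smul, inv_mul_cancel₀ hc] using x₂.smul_mem c⁻¹ hcu
  set Y₁ := (z ⊔ Kω) ⊓ x₁ with hY₁
  have hY₁x₂ : Y₁ ⊓ x₂ = z ⊓ x₁ := by
    rw [hY₁, inf_right_comm, hyx2]
  -- key upper bound : dim Y₁ ≤ dim (z ⊓ x₁) + 1
  have hub : Module.finrank K Y₁ ≤ Module.finrank K (z ⊓ x₁ : Submodule K Ω) + 1 := by
    have h := Submodule.finrank_sup_add_finrank_inf_eq Y₁ x₂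
    rw [hY₁x₂] at h
    have hle : Y₁ ⊔ x₂ ≤ x₂ ⊔ Kω := by
      refine sup_le (le_trans inf_le_left ?_) le_sup_left
      exact sup_le (le_trans hz le_sup_left) le_sup_right
    have hle' := Submodule.finrank_mono hle
    rw [hx2ω_dim] at hle'
    omega
  have hzx1_le : (z ⊓ x₁ : Submodule K Ω) ≤ x₂ ⊓ x₁ := inf_le_inf_right x₁ hz
  -- key characterization
  have key : Module.finrank K Y₁ = Module.finrank K (x₂ ⊓ x₁ : Submodule K Ω) + 1 ↔
      (x₁ ⊓ x₂ ≤ z ∧ ω ∈ x₁ ⊔ z) := by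
    constructor
    · intro hEq
      have hble := Submodule.finrank_mono hzx1_le
      have hzx1_eq : Module.finrank K (z ⊓ x₁ : Submodule K Ω)
          = Module.finrank K (x₂ ⊓ x₁ : Submodule K Ω) := by omega
      have hinf_eq : (z ⊓ x₁ : Submodule K Ω) = x₂ ⊓ x₁ :=
        Submodule.eq_of_le_of_finrank_le hzx1_le (le_of_eq hzx1_eq.symm)
      have hx12z : x₁ ⊓ x₂ ≤ z := by
        rw [inf_comm, ← hinf_eq]; exact inf_le_left
      refine ⟨hx12z, ?_⟩
      -- find w ∈ Y₁ with w ∉ x₂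
      have hne : ¬ (Y₁ ≤ x₂) := by
        intro hle
        have : Y₁ ⊓ x₂ = Y₁ := inf_eq_left.mpr hle
        rw [hY₁x₂] at this
        rw [← this] at hEq
        omega
      obtain ⟨w, hwY, hwx2⟩ := SetLike.not_le_iff_exists.mp hne
      have hwx1 : w ∈ x₁ := hwY.2
      have hwy : w ∈ z ⊔ Kω := hwY.1
      rw [Submodule.mem_sup] at hwy
      obtain ⟨u, hu, v, hv, rfl⟩ := hwy
      rw [hKω, Submodule.mem_span_singleton] at hv
      obtain ⟨c, rfl⟩ := hv
      have hc : c ≠ 0 := by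
        rintro rfl
        exact hwx2 (by simpa using hz hu)
      have hsub : u + c • ω - u ∈ x₁ ⊔ z :=
        Submodule.sub_mem _ (Submodule.mem_sup_left hwx1) (Submodule.mem_sup_right hu)
      have := Submodule.smul_mem (x₁ ⊔ z) c⁻¹ hsub
      simpa [smul_smul, inv_mul_cancel₀ hc] using this
    · rintro ⟨hx12z, hωmem⟩
      have hinf_eq : (z ⊓ x₁ : Submodule K Ω) = x₂ ⊓ x₁ := by
        refine le_antisymm hzx1_le (le_inf ?_ inf_le_right)
        intro v hv
        exact hx12z ⟨hv.2, hv.1⟩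
      rw [Submodule.mem_sup] at hωmem
      obtain ⟨u, hu, v, hv, huv⟩ := hωmem
      -- u = ω - v ∈ Y₁, u ∉ x₂
      have huY : u ∈ Y₁ := by
        refine ⟨?_, hu⟩
        have : u = (-v) + ω := by rw [← huv]; abel
        rw [this]
        exact Submodule.add_mem _ (Submodule.mem_sup_left (z.neg_mem hv))
          (Submodule.mem_sup_right (Submodule.mem_span_singleton_self ω))
      have hux2 : u ∉ x₂ := by
        intro h
        exact hω (huv ▸ x₂.add_mem h (hz hv))
      have hlt : Y₁ ⊓ x₂ < Y₁ := by
        refine lt_of_le_of_ne inf_le_left (fun h => ?_)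
        rw [← h] at huY
        exact hux2 huY.2
      have hlt' := Submodule.finrank_lt_finrank_of_lt hlt
      rw [hY₁x₂, hinf_eq] at hlt'
      rw [hinf_eq] at hub
      omega
  have hadim : Module.finrank K Y₁ ≤ Module.finrank K (z ⊔ Kω : Submodule K Ω) :=
    Submodule.finrank_mono inf_le_left
  have hbdim : Module.finrank K (x₂ ⊓ x₁ : Submodule K Ω) ≤ Module.finrank K x₂ :=
    Submodule.finrank_mono inf_le_left
  constructor
  · rw [← key]
    rw [hy_dim]
    rw [hy_dim] at hadim
    omega
  · rintro ⟨hx12z, hωmem⟩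
    have hinf_eq : (x₁ ⊓ z : Submodule K Ω) = x₁ ⊓ x₂ := by
      refine le_antisymm (inf_le_inf_left x₁ hz) (le_inf inf_le_left hx12z)
    have h1 := Submodule.finrank_sup_add_finrank_inf_eq x₁ z
    have h2 := Submodule.finrank_sup_add_finrank_inf_eq x₁ x₂
    rw [hinf_eq] at h1
    have hsup_dim : Module.finrank K (x₁ ⊔ z : Submodule K Ω) + 1 =
        Module.finrank K (x₁ ⊔ x₂ : Submodule K Ω) := by omega
    refine ⟨hsup_dim, ?_⟩
    have hsup_eq : (x₁ ⊔ z) ⊔ x₂ = x₁ ⊔ x₂ := by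
      rw [sup_assoc, sup_eq_right.mpr hz]
    · have h3 := Submodule.finrank_sup_add_finrank_inf_eq (x₁ ⊔ z) x₂
      rw [hsup_eq] at h3
      refine (Submodule.eq_of_le_of_finrank_le (le_inf le_sup_right hz : z ≤ (x₁ ⊔ z) ⊓ x₂) ?_)
      omega
end

section
/- Fix subspaces x₁ ∈ X_{r₁}, x₂ ∈ X_{r₂} of an n-dimensional F_q-vector space with ∂(x₂,x₁) = t. Then |{y ∈ X_{r₂} : ∂(y,x₂) = 1 and ∂(y,x₁) = t+1}| = q^{r₁-r₂+1}(q^t - q^{r₂})(q^t - q^{n-r₁})/(q-1)². -/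
open Module Submodule

section AuxCounting

variable {K : Type*} [Field K] [Fintype K] {V : Type*} [AddCommGroup V] [Module K V]
  [FiniteDimensional K V]

/-- The number of lines in a finite-dimensional space over a finite field that are not
contained in a fixed subspace `M`. -/
private lemma count_b_lines_count (M : Submodule K V) :
    Nat.card {L : Submodule K V // finrank K L = 1 ∧ ¬ L ≤ M} * (Fintype.card K - 1)
      = Fintype.card K ^ finrank K V - Fintype.card K ^ finrank K M := by
  classical
  have hV : Finite V := Module.finite_of_finite K
  have : Finite (Submodule K V) := Finite.of_injective _ fun a b h => SetLike.coe_injective h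
  cases nonempty_fintype V
  have : Fintype (Submodule K V) := Fintype.ofFinite _
  have hspan : ∀ v : V, v ∉ M → finrank K (K ∙ v) = 1 ∧ ¬ (K ∙ v) ≤ M := by
    intro v hv
    have hv0 : v ≠ 0 := fun h => hv (h ▸ M.zero_mem)
    exact ⟨finrank_span_singleton hv0, fun hle => hv (hle (mem_span_singleton_self v))⟩
  let f : {v : V // v ∉ M} → {L : Submodule K V // finrank K L = 1 ∧ ¬ L ≤ M} :=
    fun v => ⟨K ∙ v.1, hspan v.1 v.2⟩
  have key : ∀ L : {L : Submodule K V // finrank K L = 1 ∧ ¬ L ≤ M},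
      Nat.card {v : {v : V // v ∉ M} // f v = L} = Fintype.card K - 1 := by
    intro L
    have hL : ∀ w : V, w ∈ L.1 → w ≠ 0 → (K ∙ w) = L.1 := by
      intro w hw hw0
      exact eq_of_le_of_finrank_eq ((span_singleton_le_iff_mem w L.1).2 hw)
        (by rw [finrank_span_singleton hw0, L.2.1])
    have hnotM : ∀ w : V, w ∈ L.1 → w ≠ 0 → w ∉ M := by
      intro w hw hw0 hwM
      exact L.2.2 (hL w hw hw0 ▸ (span_singleton_le_iff_mem w M).2 hwM)
    have e : {v : {v : V // v ∉ M} // f v = L} ≃ {w : L.1 // w ≠ (0 : L.1)} :=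
      { toFun := fun v => ⟨⟨v.1.1, by
          have h : (K ∙ v.1.1) = L.1 := congrArg Subtype.val v.2
          exact h ▸ mem_span_singleton_self _⟩, by
          intro h
          exact v.1.2 ((congrArg Subtype.val h : v.1.1 = 0) ▸ M.zero_mem)⟩
        invFun := fun w => ⟨⟨w.1.1, hnotM w.1.1 w.1.2 (fun h => w.2 (Subtype.ext h))⟩,
          Subtype.ext (hL w.1.1 w.1.2 (fun h => w.2 (Subtype.ext h)))⟩
        left_inv := fun v => Subtype.ext (Subtype.ext rfl)
        right_inv := fun w => Subtype.ext (Subtype.ext rfl) }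
    rw [Nat.card_congr e, Nat.card_eq_fintype_card, Fintype.card_subtype_compl,
      Fintype.card_subtype_eq, card_eq_pow_finrank (K := K) (V := L.1), L.2.1, pow_one]
  have h1 : Nat.card {v : V // v ∉ M}
      = Fintype.card K ^ finrank K V - Fintype.card K ^ finrank K M := by
    rw [Nat.card_eq_fintype_card, Fintype.card_subtype_compl,
      card_eq_pow_finrank (K := K) (V := V)]
    congr 1
    exact card_eq_pow_finrank (K := K) (V := M)
  have h2 : Nat.card {v : V // v ∉ M}
      = Nat.card {L : Submodule K V // finrank K L = 1 ∧ ¬ L ≤ M} * (Fintype.card K - 1) := by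
    rw [← Nat.card_congr (Equiv.sigmaFiberEquiv f)]
    have : Fintype {L : Submodule K V // finrank K L = 1 ∧ ¬ L ≤ M} := Fintype.ofFinite _
    rw [Nat.card_eq_fintype_card, Fintype.card_sigma]
    calc ∑ L, Fintype.card {v : {v : V // v ∉ M} // f v = L}
        = ∑ _L : {L : Submodule K V // finrank K L = 1 ∧ ¬ L ≤ M}, (Fintype.card K - 1) :=
          Finset.sum_congr rfl fun L _ => by rw [← Nat.card_eq_fintype_card, key L]
      _ = _ := by rw [Finset.sum_const, Finset.card_univ, smul_eq_mul, Nat.card_eq_fintype_card]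
  rw [← h2, h1]

/-- The number of hyperplanes of a finite-dimensional space over a finite field that do not
contain a fixed subspace `u`. -/
private lemma count_b_hyp_count (u : Submodule K V) :
    Nat.card {z : Submodule K V // finrank K z + 1 = finrank K V ∧ ¬ u ≤ z} * (Fintype.card K - 1)
      = Fintype.card K ^ finrank K V - Fintype.card K ^ (finrank K V - finrank K u) := by
  have hann : ∀ W : Submodule K V, finrank K W.dualAnnihilator + finrank K W = finrank K V := by
    intro W
    rw [← LinearEquiv.finrank_eq (Subspace.quotEquivAnnihilator W),
      Submodule.finrank_quotient_add_finrank]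
  have e : {z : Submodule K V // finrank K z + 1 = finrank K V ∧ ¬ u ≤ z}
      ≃ {L : Submodule K (Module.Dual K V) // finrank K L = 1 ∧ ¬ L ≤ u.dualAnnihilator} :=
    { toFun := fun z => ⟨z.1.dualAnnihilator, by
        refine ⟨?_, fun hle => z.2.2 (Subspace.dualAnnihilator_le_dualAnnihilator_iff.mp hle)⟩
        have h1 := hann z.1
        have h2 := z.2.1
        omega⟩
      invFun := fun L => ⟨L.1.dualCoannihilator, by
        have hda : L.1.dualCoannihilator.dualAnnihilator = L.1 :=
          Subspace.dualCoannihilator_dualAnnihilator_eq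
        refine ⟨?_, fun hle => L.2.2
          (hda ▸ Subspace.dualAnnihilator_le_dualAnnihilator_iff.mpr hle)⟩
        have h1 := hann L.1.dualCoannihilator
        rw [hda, L.2.1] at h1
        omega⟩
      left_inv := fun z => Subtype.ext Subspace.dualAnnihilator_dualCoannihilator_eq
      right_inv := fun L => Subtype.ext Subspace.dualCoannihilator_dualAnnihilator_eq }
  rw [Nat.card_congr e, count_b_lines_count u.dualAnnihilator, Subspace.dual_finrank_eq]
  have h1 := hann u
  have h2 : finrank K u ≤ finrank K V := u.finrank_le
  have h3 : finrank K u.dualAnnihilator = finrank K V - finrank K u := by omega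
  rw [h3]

end AuxCounting

section AuxCountingAmbient

variable {K : Type*} [Field K] [Fintype K] {Ω : Type*} [AddCommGroup Ω] [Module K Ω]
  [FiniteDimensional K Ω]

/-- The number of hyperplanes of a subspace `x` that do not contain a fixed subspace `u ≤ x`. -/
private lemma count_b_hyp_count' (x u : Submodule K Ω) (hu : u ≤ x) :
    Nat.card {z : Submodule K Ω // (finrank K z + 1 = finrank K x ∧ z ≤ x) ∧ ¬ u ≤ z}
        * (Fintype.card K - 1)
      = Fintype.card K ^ finrank K x - Fintype.card K ^ (finrank K x - finrank K u) := by
  have hmapcomap : ∀ w : Submodule K Ω, w ≤ x → (comap x.subtype w).map x.subtype = w := by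
    intro w hw
    rw [Submodule.map_comap_subtype, inf_eq_right.mpr hw]
  have hcomapmap : ∀ w : Submodule K ↥x, comap x.subtype (map x.subtype w) = w := by
    intro w
    rw [Submodule.comap_map_eq, Submodule.ker_subtype, sup_bot_eq]
  have hiff : ∀ z' : Submodule K ↥x, (u ≤ map x.subtype z' ↔ comap x.subtype u ≤ z') := by
    intro z'
    constructor
    · intro h
      have := Submodule.comap_mono (f := x.subtype) h
      rwa [hcomapmap] at this
    · intro h
      have := Submodule.map_mono (f := x.subtype) h
      rwa [hmapcomap u hu] at this
  have e : {z' : Submodule K ↥x // finrank K z' + 1 = finrank K ↥x ∧ ¬ comap x.subtype u ≤ z'}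
      ≃ {z : Submodule K Ω // (finrank K z + 1 = finrank K x ∧ z ≤ x) ∧ ¬ u ≤ z} :=
    { toFun := fun z' => ⟨map x.subtype z'.1, by
        refine ⟨⟨?_, map_subtype_le x z'.1⟩, fun h => z'.2.2 ((hiff z'.1).mp h)⟩
        rw [Submodule.finrank_map_subtype_eq]
        exact z'.2.1⟩
      invFun := fun z => ⟨comap x.subtype z.1, by
        refine ⟨?_, fun h => z.2.2 (by
          have := Submodule.map_mono (f := x.subtype) h
          rwa [hmapcomap u hu, hmapcomap z.1 z.2.1.2] at this)⟩
        rw [LinearEquiv.finrank_eq (Submodule.comapSubtypeEquivOfLe z.2.1.2)]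
        exact z.2.1.1⟩
      left_inv := fun z' => Subtype.ext (hcomapmap z'.1)
      right_inv := fun z => Subtype.ext (hmapcomap z.1 z.2.1.2) }
  rw [← Nat.card_congr e, count_b_hyp_count,
    LinearEquiv.finrank_eq (Submodule.comapSubtypeEquivOfLe hu)]

omit [Fintype K] in
/-- Rank formula for the image of a submodule `y ⊇ z` in the quotient by `z`. -/
private lemma count_b_finrank_map_mkQ (z y : Submodule K Ω) (h : z ≤ y) :
    finrank K (y.map z.mkQ) + finrank K z = finrank K y := by
  have h1 : y.map z.mkQ = LinearMap.range (z.mkQ.comp y.subtype) := by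
    rw [LinearMap.range_comp, Submodule.range_subtype]
  have h2 : LinearMap.ker (z.mkQ.comp y.subtype) = comap y.subtype z := by
    rw [LinearMap.ker_comp, Submodule.ker_mkQ]
  have h3 := LinearMap.finrank_range_add_finrank_ker (z.mkQ.comp y.subtype)
  rw [h2, LinearEquiv.finrank_eq (Submodule.comapSubtypeEquivOfLe h)] at h3
  rw [h1, h3]

end AuxCountingAmbient

/-- Given `x₁ ∈ X_{r₁}`, `x₂ ∈ X_{r₂}` with `∂(x₂,x₁) = t` in an `n`-dimensional
`F_q`-vector space, the number of `y ∈ X_{r₂}` with `∂(y,x₂) = 1` and `∂(y,x₁) = t+1`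
equals `q^{r₁-r₂+1}(q^t - q^{r₂})(q^t - q^{n-r₁})/(q-1)²`. -/
theorem count_b (q n r₁ r₂ t : ℕ) (K : Type*) [Field K] [Fintype K]
    (hq : Fintype.card K = q)
    (Ω : Type*) [AddCommGroup Ω] [Module K Ω] [FiniteDimensional K Ω]
    (hn : Module.finrank K Ω = n)
    (x₁ x₂ : Submodule K Ω)
    (h1 : Module.finrank K x₁ = r₁) (h2 : Module.finrank K x₂ = r₂)
    (ht : Module.finrank K (x₂ ⊓ x₁ : Submodule K Ω) + t = r₂) :
    (Nat.card {y : Submodule K Ω // Module.finrank K y = r₂ ∧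
        Module.finrank K (y ⊓ x₂ : Submodule K Ω) + 1 = r₂ ∧
        Module.finrank K (y ⊓ x₁ : Submodule K Ω) + (t + 1) = r₂} : ℚ) =
      (q : ℚ) ^ ((r₁ : ℤ) - r₂ + 1) *
        ((q : ℚ) ^ (t : ℤ) - (q : ℚ) ^ (r₂ : ℤ)) *
        ((q : ℚ) ^ (t : ℤ) - (q : ℚ) ^ ((n : ℤ) - r₁)) / ((q : ℚ) - 1) ^ 2 := by
  classical
  subst hq
  have hfinΩ : Finite Ω := Module.finite_of_finite K
  have hfinSub : Finite (Submodule K Ω) :=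
    Finite.of_injective _ fun a b h => SetLike.coe_injective h
  set u : Submodule K Ω := x₂ ⊓ x₁ with hu_def
  have hu1 : u ≤ x₂ := inf_le_left
  have hu2 : u ≤ x₁ := inf_le_right
  -- global facts
  have hq2 : 2 ≤ Fintype.card K := Fintype.one_lt_card
  have hr2n : r₂ ≤ n := by rw [← h2, ← hn]; exact x₂.finrank_le
  have htr2 : t ≤ r₂ := by omega
  have hur1 : finrank K u ≤ r₁ := h1 ▸ Submodule.finrank_mono hu2
  have hr2r1t : r₂ ≤ r₁ + t := by omega
  have hr1tn : r₁ + t ≤ n := by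
    have h3 := Submodule.finrank_sup_add_finrank_inf_eq x₁ x₂
    have h4 : finrank K (x₁ ⊓ x₂ : Submodule K Ω) = finrank K u := by rw [hu_def, inf_comm]
    have h5 : finrank K (x₁ ⊔ x₂ : Submodule K Ω) ≤ n := by rw [← hn]; exact (x₁ ⊔ x₂).finrank_le
    omega
  set Hyp := {z : Submodule K Ω // (finrank K z + 1 = finrank K x₂ ∧ z ≤ x₂) ∧ ¬ u ≤ z}
    with hHyp
  -- facts about elements of Hyp
  have hzfacts : ∀ z : Submodule K Ω, finrank K z + 1 = r₂ → z ≤ x₂ → ¬ u ≤ z →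
      z ⊔ u = x₂ ∧ finrank K (z ⊓ x₁ : Submodule K Ω) + (t + 1) = r₂ ∧
        finrank K (x₁ ⊔ z : Submodule K Ω) = r₁ + t ∧ x₂ ≤ x₁ ⊔ z := by
    intro z hz1 hz2 hz3
    have hlt : z < z ⊔ u := left_lt_sup.mpr hz3
    have hsup_le : z ⊔ u ≤ x₂ := sup_le hz2 hu1
    have hflt : finrank K z < finrank K (z ⊔ u : Submodule K Ω) :=
      Submodule.finrank_lt_finrank_of_lt hlt
    have hfle : finrank K (z ⊔ u : Submodule K Ω) ≤ r₂ := h2 ▸ Submodule.finrank_mono hsup_le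
    have hF1 : z ⊔ u = x₂ :=
      Submodule.eq_of_le_of_finrank_eq hsup_le (by rw [h2]; omega)
    have hinf : z ⊓ x₁ = z ⊓ u := by
      rw [hu_def, ← inf_assoc, inf_eq_left.mpr hz2]
    have h6 := Submodule.finrank_sup_add_finrank_inf_eq z u
    rw [hF1, h2] at h6
    have hF2 : finrank K (z ⊓ x₁ : Submodule K Ω) + (t + 1) = r₂ := by
      rw [hinf]; omega
    have h7 := Submodule.finrank_sup_add_finrank_inf_eq x₁ z
    have h8 : finrank K (x₁ ⊓ z : Submodule K Ω) = finrank K (z ⊓ x₁ : Submodule K Ω) := by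
      rw [inf_comm]
    have hF3 : finrank K (x₁ ⊔ z : Submodule K Ω) = r₁ + t := by omega
    have hF4 : x₂ ≤ x₁ ⊔ z := by
      rw [← hF1]
      exact sup_le le_sup_right (hu2.trans le_sup_left)
    exact ⟨hF1, hF2, hF3, hF4⟩
  set S := {y : Submodule K Ω // Module.finrank K y = r₂ ∧
      Module.finrank K (y ⊓ x₂ : Submodule K Ω) + 1 = r₂ ∧
      Module.finrank K (y ⊓ x₁ : Submodule K Ω) + (t + 1) = r₂} with hS
  have hg : ∀ y : S, (finrank K (y.1 ⊓ x₂ : Submodule K Ω) + 1 = finrank K x₂ ∧ y.1 ⊓ x₂ ≤ x₂)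
      ∧ ¬ u ≤ y.1 ⊓ x₂ := by
    intro y
    obtain ⟨hy1, hy2, hy3⟩ := y.2
    refine ⟨⟨by rw [h2]; exact hy2, inf_le_right⟩, fun hle => ?_⟩
    have hle1 : u ≤ y.1 ⊓ x₁ := le_inf (hle.trans inf_le_left) hu2
    have := Submodule.finrank_mono hle1
    omega
  let g : S → Hyp := fun y => ⟨y.1 ⊓ x₂, hg y⟩
  -- the fiber equivalence
  have fibEquiv : ∀ z : Hyp, {y : S // g y = z} ≃
      {L : Submodule K (Ω ⧸ z.1) // finrank K L = 1 ∧ ¬ L ≤ (x₁ ⊔ z.1).map z.1.mkQ} := by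
    intro z
    obtain ⟨z, ⟨hz1', hz2⟩, hz3⟩ := z
    have hz1 : finrank K z + 1 = r₂ := by rw [← h2]; exact hz1'
    obtain ⟨hF1, hF2, hF3, hF4⟩ := hzfacts z hz1 hz2 hz3
    -- backward facts
    have bk : ∀ L : Submodule K (Ω ⧸ z), finrank K L = 1 → ¬ L ≤ (x₁ ⊔ z).map z.mkQ →
        (finrank K (comap z.mkQ L) = r₂ ∧
          finrank K ((comap z.mkQ L) ⊓ x₂ : Submodule K Ω) + 1 = r₂ ∧
          finrank K ((comap z.mkQ L) ⊓ x₁ : Submodule K Ω) + (t + 1) = r₂) ∧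
        (comap z.mkQ L) ⊓ x₂ = z := by
      intro L hL1 hL2
      set y := comap z.mkQ L with hy_def
      have hzy : z ≤ y := by
        intro v hv
        rw [hy_def, Submodule.mem_comap]
        have : z.mkQ v = 0 := (Submodule.Quotient.mk_eq_zero z).2 hv
        rw [this]; exact L.zero_mem
      have hmapy : map z.mkQ y = L := by
        rw [hy_def, Submodule.map_comap_eq, Submodule.range_mkQ, top_inf_eq]
      have hrk := count_b_finrank_map_mkQ z y hzy
      rw [hmapy, hL1] at hrk
      have hy1 : finrank K y = r₂ := by omega
      have hyx2 : y ⊓ x₂ = z := by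
        by_contra hne
        have hlt : z < y ⊓ x₂ := lt_of_le_of_ne (le_inf hzy hz2) (Ne.symm hne)
        have hf1 : finrank K z < finrank K (y ⊓ x₂ : Submodule K Ω) :=
          Submodule.finrank_lt_finrank_of_lt hlt
        have hf2 : finrank K (y ⊓ x₂ : Submodule K Ω) ≤ r₂ :=
          h2 ▸ Submodule.finrank_mono inf_le_right
        have he : y ⊓ x₂ = x₂ :=
          Submodule.eq_of_le_of_finrank_eq inf_le_right (by rw [h2]; omega)
        have hx2y : x₂ ≤ y := he ▸ inf_le_left
        have hxy : x₂ = y := Submodule.eq_of_le_of_finrank_eq hx2y (by rw [h2, hy1])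
        exact hL2 (by rw [← hmapy, ← hxy]; exact Submodule.map_mono hF4)
      have hLM : L ⊓ (x₁ ⊔ z).map z.mkQ = ⊥ := by
        by_contra hne
        have hne0 : finrank K (L ⊓ (x₁ ⊔ z).map z.mkQ : Submodule K (Ω ⧸ z)) ≠ 0 :=
          fun h => hne (Submodule.finrank_eq_zero.mp h)
        have hle1 : finrank K (L ⊓ (x₁ ⊔ z).map z.mkQ : Submodule K (Ω ⧸ z)) ≤ 1 :=
          hL1 ▸ Submodule.finrank_mono inf_le_left
        have heq : L ⊓ (x₁ ⊔ z).map z.mkQ = L :=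
          Submodule.eq_of_le_of_finrank_eq inf_le_left (by omega)
        exact hL2 (heq ▸ (inf_le_right : L ⊓ (x₁ ⊔ z).map z.mkQ ≤ _))
      have hyx1 : y ⊓ x₁ = z ⊓ x₁ := by
        refine le_antisymm (le_inf ?_ inf_le_right) (inf_le_inf_right _ hzy)
        intro v hv
        have hvL : z.mkQ v ∈ L := (Submodule.mem_comap).1 hv.1
        have hvM : z.mkQ v ∈ (x₁ ⊔ z).map z.mkQ :=
          Submodule.mem_map_of_mem (Submodule.mem_sup_left hv.2)
        have : z.mkQ v ∈ (⊥ : Submodule K (Ω ⧸ z)) := hLM ▸ Submodule.mem_inf.2 ⟨hvL, hvM⟩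
        exact (Submodule.Quotient.mk_eq_zero z).1 (Submodule.mem_bot _ |>.1 this)
      refine ⟨⟨hy1, ?_, ?_⟩, hyx2⟩
      · rw [hyx2]; exact hz1
      · rw [hyx1]; exact hF2
    -- forward facts
    have fw : ∀ y : Submodule K Ω, finrank K y = r₂ →
        finrank K (y ⊓ x₁ : Submodule K Ω) + (t + 1) = r₂ → y ⊓ x₂ = z →
        finrank K (map z.mkQ y) = 1 ∧ ¬ map z.mkQ y ≤ map z.mkQ (x₁ ⊔ z) := by
      intro y hy1 hy3 hyz
      have hzy : z ≤ y := hyz ▸ inf_le_left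
      have hrk := count_b_finrank_map_mkQ z y hzy
      refine ⟨by omega, fun hle => ?_⟩
      have hcle := Submodule.comap_mono (f := z.mkQ) hle
      rw [Submodule.comap_map_mkQ, Submodule.comap_map_mkQ] at hcle
      have hy_le : y ≤ x₁ ⊔ z := by
        have ha : z ⊔ y = y := sup_eq_right.mpr hzy
        have hb : z ⊔ (x₁ ⊔ z) = x₁ ⊔ z := sup_eq_right.mpr le_sup_right
        rw [ha, hb] at hcle; exact hcle
      have hmod : (z ⊔ x₁) ⊓ y = z ⊔ (x₁ ⊓ y) := sup_inf_assoc_of_le x₁ hzy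
      have hyy : (z ⊔ x₁) ⊓ y = y := inf_eq_right.mpr (by rw [sup_comm]; exact hy_le)
      have hle2 : z ⊓ x₁ ≤ y ⊓ x₁ := inf_le_inf_right _ hzy
      have heq : z ⊓ x₁ = y ⊓ x₁ := Submodule.eq_of_le_of_finrank_eq hle2 (by omega)
      have hyz' : y ≤ z := by
        rw [← hyy, hmod]
        refine sup_le le_rfl ?_
        rw [inf_comm, ← heq]
        exact inf_le_left
      have := Submodule.finrank_mono hyz'
      omega
    exact
      { toFun := fun y => ⟨map z.mkQ y.1.1, by
          have hyz : y.1.1 ⊓ x₂ = z := congrArg Subtype.val y.2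
          exact fw y.1.1 y.1.2.1 y.1.2.2.2 hyz⟩
        invFun := fun L => ⟨⟨comap z.mkQ L.1, (bk L.1 L.2.1 L.2.2).1⟩,
          Subtype.ext (bk L.1 L.2.1 L.2.2).2⟩
        left_inv := fun y => by
          have hyz : y.1.1 ⊓ x₂ = z := congrArg Subtype.val y.2
          have hzy : z ≤ (y.1.1 : Submodule K Ω) := le_of_eq_of_le hyz.symm inf_le_left
          refine Subtype.ext (Subtype.ext ?_)
          show comap z.mkQ (map z.mkQ y.1.1) = y.1.1
          rw [Submodule.comap_map_mkQ, sup_eq_right.mpr hzy]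
        right_inv := fun L => by
          refine Subtype.ext ?_
          show map z.mkQ (comap z.mkQ L.1) = L.1
          rw [Submodule.map_comap_eq, Submodule.range_mkQ, top_inf_eq] }
  -- the main equivalence
  have E : S ≃ Σ z : Hyp,
      {L : Submodule K (Ω ⧸ z.1) // finrank K L = 1 ∧ ¬ L ≤ (x₁ ⊔ z.1).map z.1.mkQ} :=
    (Equiv.sigmaFiberEquiv g).symm.trans (Equiv.sigmaCongrRight fibEquiv)
  -- the fiber count
  have fibCount : ∀ z : Hyp,
      Nat.card {L : Submodule K (Ω ⧸ z.1) // finrank K L = 1 ∧ ¬ L ≤ (x₁ ⊔ z.1).map z.1.mkQ}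
        * (Fintype.card K - 1) = Fintype.card K ^ (n + 1 - r₂) - Fintype.card K ^ (r₁ + t + 1 - r₂) := by
    intro z
    obtain ⟨z, ⟨hz1', hz2⟩, hz3⟩ := z
    have hz1 : finrank K z + 1 = r₂ := by rw [← h2]; exact hz1'
    obtain ⟨hF1, hF2, hF3, hF4⟩ := hzfacts z hz1 hz2 hz3
    have hquot : finrank K (Ω ⧸ z) + finrank K z = n := by
      rw [← hn]; exact Submodule.finrank_quotient_add_finrank z
    have hq5 : finrank K (Ω ⧸ z) = n + 1 - r₂ := by omega
    have hmrk := count_b_finrank_map_mkQ z (x₁ ⊔ z) le_sup_right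
    rw [hF3] at hmrk
    have hq6 : finrank K ((x₁ ⊔ z).map z.mkQ) = r₁ + t + 1 - r₂ := by omega
    have := count_b_lines_count (K := K) (V := Ω ⧸ z) ((x₁ ⊔ z).map z.mkQ)
    rw [hq5, hq6] at this
    exact this
  -- count of Hyp
  have hypCount : Nat.card Hyp * (Fintype.card K - 1) = Fintype.card K ^ r₂ - Fintype.card K ^ t := by
    have hc := count_b_hyp_count' x₂ u hu1
    have hfu : Fintype.card K ^ finrank K x₂ - Fintype.card K ^ (finrank K x₂ - finrank K u)
        = Fintype.card K ^ r₂ - Fintype.card K ^ t := by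
      rw [h2]
      have h9 : r₂ - finrank K u = t := by omega
      rw [h9]
    rw [hfu] at hc
    exact hc
  -- summing up
  have finHyp : Finite Hyp := Subtype.finite
  have fintHyp : Fintype Hyp := Fintype.ofFinite _
  have finFib : ∀ z : Hyp, Finite
      {L : Submodule K (Ω ⧸ z.1) // finrank K L = 1 ∧ ¬ L ≤ (x₁ ⊔ z.1).map z.1.mkQ} := by
    intro z
    have h1 : Finite (Ω ⧸ z.1) := Quotient.finite _
    have : Finite (Submodule K (Ω ⧸ z.1)) :=
      Finite.of_injective _ fun a b h => SetLike.coe_injective h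
    exact Subtype.finite
  have fintFib : ∀ z : Hyp, Fintype
      {L : Submodule K (Ω ⧸ z.1) // finrank K L = 1 ∧ ¬ L ≤ (x₁ ⊔ z.1).map z.1.mkQ} :=
    fun z => @Fintype.ofFinite _ (finFib z)
  have main1 : Nat.card S * (Fintype.card K - 1)
      = Nat.card Hyp * (Fintype.card K ^ (n + 1 - r₂) - Fintype.card K ^ (r₁ + t + 1 - r₂)) := by
    rw [Nat.card_congr E]
    rw [Nat.card_eq_fintype_card (α := Σ z : Hyp, _), Fintype.card_sigma]
    rw [Finset.sum_mul]
    calc ∑ z : Hyp, Fintype.card _ * (Fintype.card K - 1)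
        = ∑ _z : Hyp, (Fintype.card K ^ (n + 1 - r₂) - Fintype.card K ^ (r₁ + t + 1 - r₂)) :=
          Finset.sum_congr rfl fun z _ => by
            rw [← Nat.card_eq_fintype_card]; exact fibCount z
      _ = _ := by
          rw [Finset.sum_const, Finset.card_univ, smul_eq_mul, Nat.card_eq_fintype_card]
  have NS : Nat.card S * (Fintype.card K - 1) ^ 2
      = (Fintype.card K ^ r₂ - Fintype.card K ^ t) * (Fintype.card K ^ (n + 1 - r₂) - Fintype.card K ^ (r₁ + t + 1 - r₂)) := by
    calc Nat.card S * (Fintype.card K - 1) ^ 2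
        = (Nat.card S * (Fintype.card K - 1)) * (Fintype.card K - 1) := by ring
      _ = (Nat.card Hyp * (Fintype.card K - 1))
            * (Fintype.card K ^ (n + 1 - r₂) - Fintype.card K ^ (r₁ + t + 1 - r₂)) := by rw [main1]; ring
      _ = _ := by rw [hypCount]
  -- cast to ℚ
  have hq0 : ((Fintype.card K : ℕ) : ℚ) ≠ 0 := by
    have : (2 : ℚ) ≤ ((Fintype.card K : ℕ) : ℚ) := by exact_mod_cast hq2
    linarith
  have hc1 : (((Fintype.card K : ℕ) : ℚ) - 1) ≠ 0 := by
    have : (2 : ℚ) ≤ ((Fintype.card K : ℕ) : ℚ) := by exact_mod_cast hq2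
    linarith
  rw [eq_div_iff (pow_ne_zero 2 hc1)]
  have NSQ : (Nat.card S : ℚ) * (((Fintype.card K : ℕ) : ℚ) - 1) ^ 2
      = (((Fintype.card K : ℕ) : ℚ) ^ r₂ - ((Fintype.card K : ℕ) : ℚ) ^ t)
        * (((Fintype.card K : ℕ) : ℚ) ^ (n + 1 - r₂ : ℕ) - ((Fintype.card K : ℕ) : ℚ) ^ (r₁ + t + 1 - r₂ : ℕ)) := by
    have e1 : ((Fintype.card K - 1 : ℕ) : ℚ) = ((Fintype.card K : ℕ) : ℚ) - 1 := by
      rw [Nat.cast_sub (by omega), Nat.cast_one]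
    have e2 : ((Fintype.card K ^ r₂ - Fintype.card K ^ t : ℕ) : ℚ) = ((Fintype.card K : ℕ) : ℚ) ^ r₂ - ((Fintype.card K : ℕ) : ℚ) ^ t := by
      rw [Nat.cast_sub (Nat.pow_le_pow_right (by omega) htr2)]
      push_cast; ring
    have e3 : ((Fintype.card K ^ (n + 1 - r₂) - Fintype.card K ^ (r₁ + t + 1 - r₂) : ℕ) : ℚ)
        = ((Fintype.card K : ℕ) : ℚ) ^ (n + 1 - r₂ : ℕ) - ((Fintype.card K : ℕ) : ℚ) ^ (r₁ + t + 1 - r₂ : ℕ) := by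
      rw [Nat.cast_sub (Nat.pow_le_pow_right (by omega) (by omega))]
      push_cast; ring
    calc (Nat.card S : ℚ) * (((Fintype.card K : ℕ) : ℚ) - 1) ^ 2
        = ((Nat.card S * (Fintype.card K - 1) ^ 2 : ℕ) : ℚ) := by
          rw [Nat.cast_mul, Nat.cast_pow, e1]
      _ = (((Fintype.card K ^ r₂ - Fintype.card K ^ t) * (Fintype.card K ^ (n + 1 - r₂) - Fintype.card K ^ (r₁ + t + 1 - r₂)) : ℕ) : ℚ) := by
          rw [NS]
      _ = _ := by rw [Nat.cast_mul, e2, e3]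
  rw [NSQ]
  -- final zpow identity
  have p1 : ((Fintype.card K : ℕ) : ℚ) ^ (n + 1 - r₂ : ℕ) = ((Fintype.card K : ℕ) : ℚ) ^ (n + 1) * (((Fintype.card K : ℕ) : ℚ) ^ r₂)⁻¹ :=
    pow_sub₀ _ hq0 (by omega)
  have p2 : ((Fintype.card K : ℕ) : ℚ) ^ (r₁ + t + 1 - r₂ : ℕ) = ((Fintype.card K : ℕ) : ℚ) ^ (r₁ + t + 1) * (((Fintype.card K : ℕ) : ℚ) ^ r₂)⁻¹ :=
    pow_sub₀ _ hq0 (by omega)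
  have p3 : ((Fintype.card K : ℕ) : ℚ) ^ ((r₁ : ℤ) - r₂ + 1) = ((Fintype.card K : ℕ) : ℚ) ^ r₁ * (((Fintype.card K : ℕ) : ℚ) ^ r₂)⁻¹ * ((Fintype.card K : ℕ) : ℚ) := by
    rw [zpow_add₀ hq0, zpow_sub₀ hq0, zpow_one, zpow_natCast, zpow_natCast]
    ring
  have p4 : ((Fintype.card K : ℕ) : ℚ) ^ ((n : ℤ) - r₁) = ((Fintype.card K : ℕ) : ℚ) ^ n * (((Fintype.card K : ℕ) : ℚ) ^ r₁)⁻¹ := by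
    rw [zpow_sub₀ hq0, zpow_natCast, zpow_natCast]
    ring
  rw [p1, p2, p3, p4, zpow_natCast, zpow_natCast]
  field_simp
  ring
end
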